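/- arXiv:2308.09466 — 13 statements merged into one kernel-verified Lean document; each statement's English description precedes it below -/
import Mathlib

section
/- Let S be a monoid and let T be a Hausdorff topology on S for which the multiplication map S × S → S is continuous (a Hausdorff semigroup topology). Then every set that is open in the Zariski topology on S is also T-open; that is, the Zariski topology is coarser than every Hausdorff semigroup topology on S. -/
/-- Evaluation of the word `p_k · s · p_{k-1} · s ⋯ s · p_0` at `s`,
where the word is given by its lowest coefficient `p₀` and the list
`ps = [p₁, …, p_k]` of the remaining coefficients. -/
def wordEval {S : Type*} [Monoid S] (s : S) (p₀ : S) (ps : List S) : S :=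
  ps.foldl (fun acc q => q * s * acc) p₀

/-- The Zariski topology on a monoid `S`: generated by the sets
`M_{φ,ψ} = {s | φ(s) ≠ ψ(s)}` for all pairs of words `φ, ψ` with coefficients in `S`. -/
def zariskiTopology (S : Type*) [Monoid S] : TopologicalSpace S :=
  TopologicalSpace.generateFrom
    { M : Set S | ∃ (p₀ : S) (ps : List S) (q₀ : S) (qs : List S),
        M = { s : S | wordEval s p₀ ps ≠ wordEval s q₀ qs } }

lemma wordEval_continuous {S : Type*} [Monoid S] [TopologicalSpace S]
    [ContinuousMul S] (ps : List S) (f : S → S) (hf : Continuous f) :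
    Continuous (fun s => ps.foldl (fun acc q => q * s * acc) (f s)) := by
  induction ps generalizing f with
  | nil => simpa using hf
  | cons q ps ih =>
    simpa [List.foldl_cons] using ih (fun s => q * s * f s)
      (((continuous_const.mul continuous_id).mul hf))

/-- The Zariski topology is coarser than any Hausdorff semigroup topology on a monoid:
every Zariski-open set is open in any Hausdorff topology making multiplication
jointly continuous. -/
theorem stmt2 (S : Type*) [Monoid S] (T : TopologicalSpace S)
    (hT2 : @T2Space S T)
    (hmul : @Continuous (S × S) S (@instTopologicalSpaceProd S S T T) T
      (fun p => p.1 * p.2)) :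
    ∀ U : Set S, @IsOpen S (zariskiTopology S) U → @IsOpen S T U := by
  letI := T
  haveI : ContinuousMul S := ⟨hmul⟩
  intro U hU
  have : T ≤ zariskiTopology S := by
    rw [zariskiTopology, TopologicalSpace.le_generateFrom_iff_subset_isOpen]
    rintro M ⟨p₀, ps, q₀, qs, rfl⟩
    have hφ : Continuous (fun s => wordEval s p₀ ps) :=
      wordEval_continuous ps (fun _ => p₀) continuous_const
    have hψ : Continuous (fun s => wordEval s q₀ qs) :=
      wordEval_continuous qs (fun _ => q₀) continuous_const
    have : IsClosed {s : S | wordEval s p₀ ps = wordEval s q₀ qs} :=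
      isClosed_eq hφ hψ
    have h2 := this.isOpen_compl
    exact h2
  exact hU.mono this
end

section
/- Let A be a countably infinite oligomorphic relational structure without algebraicity. Then for every a ∈ A there exist functions f and g lying in the closure of Aut(A), taken inside the space of all functions A → A with the topology of pointwise convergence, such that f and g agree on A \ {a} and f(a) ≠ g(a). -/
/-- The topology of pointwise convergence on functions `A → A`:
the product topology where every factor `A` is discrete. -/
def pwTop (A : Type*) : TopologicalSpace (A → A) :=
  @Pi.topologicalSpace A (fun _ => A) (fun _ => ⊥)

/-- `f` is a homomorphism between the relational structures `⟨A, R⟩` and `⟨B, S⟩`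
(same relational language: index set `ι` with arities `ar`). -/
def IsHomOn {ι : Type*} {ar : ι → ℕ} {A B : Type*}
    (R : ∀ i, (Fin (ar i) → A) → Prop) (S : ∀ i, (Fin (ar i) → B) → Prop)
    (f : A → B) : Prop :=
  ∀ i x, R i x → S i (fun j => f (x j))

/-- `f` is an automorphism of the relational structure `⟨A, R⟩`. -/
def IsAutoOn {ι : Type*} {ar : ι → ℕ} {A : Type*}
    (R : ∀ i, (Fin (ar i) → A) → Prop) (f : A → A) : Prop :=
  Function.Bijective f ∧ ∀ i x, R i x ↔ R i (fun j => f (x j))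

/-- `⟨A, R⟩` is oligomorphic: for every `n ≥ 1`, the diagonal action of the
automorphism group on `n`-tuples has finitely many orbits. -/
def Oligomorphic {ι : Type*} {ar : ι → ℕ} {A : Type*}
    (R : ∀ i, (Fin (ar i) → A) → Prop) : Prop :=
  ∀ n : ℕ, 1 ≤ n →
    {O : Set (Fin n → A) | ∃ x : Fin n → A,
      O = {y | ∃ f, IsAutoOn R f ∧ y = fun j => f (x j)}}.Finite

/-- `⟨A, R⟩` has no algebraicity: for every finite `Y ⊆ A` and `a ∉ Y`, the orbit
of `a` under automorphisms fixing `Y` pointwise is infinite. -/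
def NoAlgebraicity {ι : Type*} {ar : ι → ℕ} {A : Type*}
    (R : ∀ i, (Fin (ar i) → A) → Prop) : Prop :=
  ∀ (Y : Finset A) (a : A), a ∉ Y →
    {b : A | ∃ f, IsAutoOn R f ∧ (∀ y ∈ Y, f y = y) ∧ f a = b}.Infinite

section Aux

variable {ι A : Type*} {ar : ι → ℕ} (R : ∀ i, (Fin (ar i) → A) → Prop)

lemma auto_id : IsAutoOn R id :=
  ⟨Function.bijective_id, fun _ _ => Iff.rfl⟩

lemma auto_comp {f g : A → A} (hf : IsAutoOn R f) (hg : IsAutoOn R g) :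
    IsAutoOn R (fun x => f (g x)) :=
  ⟨Function.Bijective.comp hf.1 hg.1, fun i x => (hg.2 i x).trans (hf.2 i _)⟩

lemma auto_inv {f : A → A} (hf : IsAutoOn R f) :
    ∃ g, IsAutoOn R g ∧ (∀ x, g (f x) = x) ∧ (∀ x, f (g x) = x) := by
  obtain ⟨g, hgf, hfg⟩ := Function.bijective_iff_has_inverse.mp hf.1
  refine ⟨g, ⟨Function.bijective_iff_has_inverse.mpr ⟨f, hfg, hgf⟩, ?_⟩, hgf, hfg⟩
  intro i x
  have h2 := (hf.2 i (fun j => g (x j))).symm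
  simpa [hfg _] using h2

lemma pigeonhole (holig : Oligomorphic R) (k : ℕ) (u : ℕ → (ℕ → A)) :
    ∃ m₀ : ℕ, {m | ∃ f, IsAutoOn R f ∧ ∀ i < k + 1, u m i = f (u m₀ i)}.Infinite := by
  have hfin := holig (k + 1) (Nat.le_add_left 1 k)
  haveI := hfin.to_subtype
  set Orb : Set (Set (Fin (k+1) → A)) :=
    {O : Set (Fin (k+1) → A) | ∃ x : Fin (k+1) → A,
      O = {y | ∃ f, IsAutoOn R f ∧ y = fun j => f (x j)}} with hOrb
  let Φ : ℕ → Orb := fun m =>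
    ⟨{y | ∃ f, IsAutoOn R f ∧ y = fun j : Fin (k+1) => f (u m (j : ℕ))},
      ⟨fun j : Fin (k+1) => u m (j : ℕ), rfl⟩⟩
  obtain ⟨y, hy⟩ := Finite.exists_infinite_fiber Φ
  have hyinf : (Φ ⁻¹' {y}).Infinite := Set.infinite_coe_iff.mp hy
  obtain ⟨m₀, hm₀⟩ := hyinf.nonempty
  refine ⟨m₀, hyinf.mono ?_⟩
  intro m hm
  have heq : (Φ m : Set (Fin (k+1) → A)) = (Φ m₀ : Set (Fin (k+1) → A)) := by
    have : Φ m = Φ m₀ := by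
      rw [Set.mem_preimage, Set.mem_singleton_iff] at hm hm₀
      rw [hm, hm₀]
    exact congrArg Subtype.val this
  have hmem : (fun j : Fin (k+1) => u m (j : ℕ)) ∈ (Φ m : Set (Fin (k+1) → A)) :=
    ⟨id, auto_id R, rfl⟩
  rw [heq] at hmem
  obtain ⟨f, hf, hfe⟩ := hmem
  refine ⟨f, hf, fun i hi => ?_⟩
  exact congrFun hfe ⟨i, hi⟩

/-- A tuple `t` (coded as `ℕ → A`) is valid at level `n`: heads differ, and both
`(t 0, t 2, …, t (n+1))` and `(t 1, t 2, …, t (n+1))` are automorphic images of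
`(a, b 0, …, b (n-1))`. -/
def validT (a : A) (b : ℕ → A) (n : ℕ) (t : ℕ → A) : Prop :=
  t 0 ≠ t 1 ∧
  (∃ f, IsAutoOn R f ∧ f a = t 0 ∧ ∀ i < n, f (b i) = t (i + 2)) ∧
  (∃ f, IsAutoOn R f ∧ f a = t 1 ∧ ∀ i < n, f (b i) = t (i + 2))

def extT (a : A) (b : ℕ → A) (n : ℕ) (t : ℕ → A) : Prop :=
  ∀ m, ∃ s, validT R a b (n + m) s ∧ ∀ i < n + 2, s i = t i

variable {a : A} {b : ℕ → A}

lemma validT_mono {n m : ℕ} (h : n ≤ m) {t : ℕ → A} (ht : validT R a b m t) :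
    validT R a b n t := by
  obtain ⟨h01, ⟨f, hf, hfa, hfb⟩, ⟨g, hg, hga, hgb⟩⟩ := ht
  exact ⟨h01, ⟨f, hf, hfa, fun i hi => hfb i (lt_of_lt_of_le hi h)⟩,
    ⟨g, hg, hga, fun i hi => hgb i (lt_of_lt_of_le hi h)⟩⟩

lemma validT_comp {n : ℕ} {t : ℕ → A} (ht : validT R a b n t)
    {γ : A → A} (hγ : IsAutoOn R γ) : validT R a b n (fun i => γ (t i)) := by
  obtain ⟨h01, ⟨f, hf, hfa, hfb⟩, ⟨g, hg, hga, hgb⟩⟩ := ht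
  refine ⟨fun h => h01 (hγ.1.1 h), ?_, ?_⟩
  · exact ⟨fun x => γ (f x), auto_comp R hγ hf, congrArg γ hfa,
      fun i hi => congrArg γ (hfb i hi)⟩
  · exact ⟨fun x => γ (g x), auto_comp R hγ hg, congrArg γ hga,
      fun i hi => congrArg γ (hgb i hi)⟩

lemma validT_congr {n : ℕ} {s t : ℕ → A} (hst : ∀ i < n + 2, s i = t i)
    (hs : validT R a b n s) : validT R a b n t := by
  obtain ⟨h01, ⟨f, hf, hfa, hfb⟩, ⟨g, hg, hga, hgb⟩⟩ := hs
  have h0 : s 0 = t 0 := hst 0 (by omega)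
  have h1 : s 1 = t 1 := hst 1 (by omega)
  refine ⟨by rw [← h0, ← h1]; exact h01, ?_, ?_⟩
  · exact ⟨f, hf, by rw [hfa, h0], fun i hi => by rw [hfb i hi, hst (i+2) (by omega)]⟩
  · exact ⟨g, hg, by rw [hga, h1], fun i hi => by rw [hgb i hi, hst (i+2) (by omega)]⟩

lemma extT_valid {n : ℕ} {t : ℕ → A} (h : extT R a b n t) : validT R a b n t := by
  obtain ⟨s, hs, hag⟩ := h 0
  exact validT_congr R hag hs

end Aux

section Aux2

variable {ι A : Type*} {ar : ι → ℕ} (R : ∀ i, (Fin (ar i) → A) → Prop)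
variable {a : A} {b : ℕ → A}

lemma validT_nonempty (halg : NoAlgebraicity R) (hba : ∀ i, b i ≠ a) (n : ℕ) :
    ∃ s, validT R a b n s := by
  classical
  set Y : Finset A := (Finset.range n).image b with hY
  have haY : a ∉ Y := by
    simp only [hY, Finset.mem_image, Finset.mem_range]
    rintro ⟨i, _, hi⟩
    exact hba i hi
  obtain ⟨v, hvS, hva⟩ := ((halg Y a haY).diff (Set.finite_singleton a)).nonempty
  obtain ⟨f, hf, hfix, hfa⟩ := hvS
  have hvne : a ≠ v := fun h => hva (by simp [← h])
  refine ⟨fun k => if k = 0 then a else if k = 1 then v else b (k - 2), ?_, ?_, ?_⟩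
  · simpa using hvne
  · refine ⟨id, auto_id R, by simp, fun i hi => ?_⟩
    show b i = if i + 2 = 0 then a else if i + 2 = 1 then v else b (i + 2 - 2)
    rw [if_neg (by omega), if_neg (by omega), Nat.add_sub_cancel]
  · refine ⟨f, hf, by simpa using hfa, fun i hi => ?_⟩
    show f (b i) = if i + 2 = 0 then a else if i + 2 = 1 then v else b (i + 2 - 2)
    rw [if_neg (by omega), if_neg (by omega), Nat.add_sub_cancel]
    exact hfix _ (by
      simp only [hY, Finset.mem_image, Finset.mem_range]
      exact ⟨i, hi, rfl⟩)

lemma extT_base (holig : Oligomorphic R) (halg : NoAlgebraicity R)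
    (hba : ∀ i, b i ≠ a) : ∃ t, extT R a b 0 t := by
  choose u hu using validT_nonempty R halg hba
  obtain ⟨m₀, hM⟩ := pigeonhole R holig 1 u
  refine ⟨u m₀, fun m => ?_⟩
  obtain ⟨m', hm', hmm'⟩ := hM.exists_gt m
  obtain ⟨f, hf, hfe⟩ := hm'
  obtain ⟨g, hg, hgf, hfg⟩ := auto_inv R hf
  refine ⟨fun i => g (u m' i),
    validT_comp R (validT_mono R (by omega : 0 + m ≤ m') (hu m')) hg, ?_⟩
  intro i hi
  show g (u m' i) = u m₀ i
  rw [hfe i (by omega), hgf]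

lemma extT_step (holig : Oligomorphic R) {n : ℕ} {t : ℕ → A} (h : extT R a b n t) :
    ∃ t', (∀ i < n + 2, t' i = t i) ∧ extT R a b (n + 1) t' := by
  choose u hu hagree using fun m => h (m + 1)
  obtain ⟨m₀, hM⟩ := pigeonhole R holig (n + 2) u
  refine ⟨u m₀, fun i hi => hagree m₀ i hi, fun m => ?_⟩
  obtain ⟨m', hm', hmm'⟩ := hM.exists_gt m
  obtain ⟨f, hf, hfe⟩ := hm'
  obtain ⟨g, hg, hgf, hfg⟩ := auto_inv R hf
  refine ⟨fun i => g (u m' i),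
    validT_comp R (validT_mono R (by omega : n + 1 + m ≤ n + (m' + 1)) (hu m')) hg, ?_⟩
  intro i hi
  show g (u m' i) = u m₀ i
  rw [hfe i (by omega), hgf]

end Aux2

lemma exists_enum {A : Type*} [Countable A] [Infinite A] (a : A) :
    ∃ (b : ℕ → A) (idx : A → ℕ), (∀ i, b i ≠ a) ∧ (∀ x, x ≠ a → b (idx x) = x) := by
  obtain ⟨d⟩ := nonempty_denumerable A
  let e : ℕ ≃ A := (@Denumerable.eqv A d).symm
  set k : ℕ := e.symm a with hk
  refine ⟨fun n => e (if n < k then n else n + 1),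
    fun x => if e.symm x < k then e.symm x else e.symm x - 1, ?_, ?_⟩
  · intro i h
    have := congrArg e.symm h
    rw [Equiv.symm_apply_apply, ← hk] at this
    by_cases hik : i < k <;> simp [hik] at this <;> omega
  · intro x hx
    have hxk : e.symm x ≠ k := by
      intro h
      apply hx
      have := congrArg e h
      rwa [Equiv.apply_symm_apply, hk, Equiv.apply_symm_apply] at this
    show e (if (if e.symm x < k then e.symm x else e.symm x - 1) < k then
        (if e.symm x < k then e.symm x else e.symm x - 1) else
        (if e.symm x < k then e.symm x else e.symm x - 1) + 1) = x
    by_cases hj : e.symm x < k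
    · rw [if_pos hj, if_pos hj, Equiv.apply_symm_apply]
    · rw [if_neg hj, if_neg (by omega), show e.symm x - 1 + 1 = e.symm x by omega,
        Equiv.apply_symm_apply]

lemma mem_pwClosure {A : Type*} {S : Set (A → A)} {f : A → A}
    (H : ∀ I : Finset A, ∃ h ∈ S, ∀ x ∈ I, h x = f x) :
    f ∈ @closure (A → A) (pwTop A) S := by
  letI : TopologicalSpace A := ⊥
  haveI : DiscreteTopology A := ⟨rfl⟩
  have hpw : pwTop A = (Pi.topologicalSpace : TopologicalSpace (A → A)) := rfl
  rw [hpw, mem_closure_iff]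
  intro o ho hfo
  rcases isOpen_pi_iff.mp ho f hfo with ⟨I, u, hu, hsub⟩
  obtain ⟨h, hS, hag⟩ := H I
  refine ⟨h, hsub ?_, hS⟩
  intro x hx
  rw [hag x hx]
  exact (hu x hx).2


/-- For an ω-categorical structure without algebraicity, for every point `a` there are
two maps in the pointwise closure of the automorphism group that agree off `a` and
differ at `a`. -/
theorem stmt3 {ι A : Type*} {ar : ι → ℕ} [Countable A] [Infinite A]
    (R : ∀ i, (Fin (ar i) → A) → Prop)
    (holig : Oligomorphic R) (halg : NoAlgebraicity R) (a : A) :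
    ∃ f g : A → A,
      f ∈ @closure (A → A) (pwTop A) {h | IsAutoOn R h} ∧
      g ∈ @closure (A → A) (pwTop A) {h | IsAutoOn R h} ∧
      (∀ x : A, x ≠ a → f x = g x) ∧ f a ≠ g a := by
  classical
  obtain ⟨b, idx, hba, hbidx⟩ := exists_enum a
  obtain ⟨t₀, ht₀⟩ := extT_base R holig halg hba
  choose next hnext1 hnext2 using
    fun (n : ℕ) (t : ℕ → A) (h : extT R a b n t) => extT_step R holig h
  let B : ∀ n : ℕ, {t : ℕ → A // extT R a b n t} :=
    fun n => Nat.rec ⟨t₀, ht₀⟩ (fun n p => ⟨next n p.1 p.2, hnext2 n p.1 p.2⟩) n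
  have hBstep : ∀ n, ∀ i < n + 2, (B (n+1)).1 i = (B n).1 i :=
    fun n => hnext1 n (B n).1 (B n).2
  have hBmono : ∀ m n, n ≤ m → ∀ i < n + 2, (B m).1 i = (B n).1 i := by
    intro m
    induction m with
    | zero =>
      intro n hn i hi
      have : n = 0 := by omega
      subst this; rfl
    | succ m ih =>
      intro n hn i hi
      rcases Nat.lt_or_ge n (m + 1) with h | h
      · rw [hBstep m i (by omega)]
        exact ih n (by omega) i hi
      · have : n = m + 1 := by omega
        subst this; rfl
  set hfun : ℕ → A := fun i => (B i).1 i with hhdef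
  have hval : ∀ n, ∀ i < n + 2, hfun i = (B n).1 i := by
    intro n i hi
    have h1 : (B (max n i)).1 i = (B i).1 i :=
      hBmono (max n i) i (le_max_right _ _) i (by omega)
    have h2 : (B (max n i)).1 i = (B n).1 i :=
      hBmono (max n i) n (le_max_left _ _) i hi
    show (B i).1 i = (B n).1 i
    rw [← h1, h2]
  have hne : hfun 0 ≠ hfun 1 := by
    have h01 := (extT_valid R (B 0).2).1
    rw [hval 0 0 (by omega), hval 0 1 (by omega)]
    exact h01
  have happrox : ∀ n,
      (∃ β, IsAutoOn R β ∧ β a = hfun 0 ∧ ∀ i < n, β (b i) = hfun (i + 2)) ∧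
      (∃ β, IsAutoOn R β ∧ β a = hfun 1 ∧ ∀ i < n, β (b i) = hfun (i + 2)) := by
    intro n
    obtain ⟨h01, ⟨f, hf, hfa, hfb⟩, ⟨g, hg, hga, hgb⟩⟩ := extT_valid R (B n).2
    constructor
    · exact ⟨f, hf, by rw [hfa, ← hval n 0 (by omega)],
        fun i hi => by rw [hfb i hi, ← hval n (i + 2) (by omega)]⟩
    · exact ⟨g, hg, by rw [hga, ← hval n 1 (by omega)],
        fun i hi => by rw [hgb i hi, ← hval n (i + 2) (by omega)]⟩
  refine ⟨fun x => if x = a then hfun 0 else hfun (idx x + 2),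
    fun x => if x = a then hfun 1 else hfun (idx x + 2), ?_, ?_, ?_, ?_⟩
  · apply mem_pwClosure
    intro I
    obtain ⟨β, hβ, hβa, hβb⟩ := (happrox (I.sup idx + 1)).1
    refine ⟨β, hβ, fun x hx => ?_⟩
    by_cases hxa : x = a
    · subst hxa
      simpa using hβa
    · simp only [if_neg hxa]
      have hix : idx x < I.sup idx + 1 := by
        have := Finset.le_sup (f := idx) hx
        omega
      have h2 := hβb (idx x) hix
      rwa [hbidx x hxa] at h2
  · apply mem_pwClosure
    intro I
    obtain ⟨β, hβ, hβa, hβb⟩ := (happrox (I.sup idx + 1)).2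
    refine ⟨β, hβ, fun x hx => ?_⟩
    by_cases hxa : x = a
    · subst hxa
      simpa using hβa
    · simp only [if_neg hxa]
      have hix : idx x < I.sup idx + 1 := by
        have := Finset.le_sup (f := idx) hx
        omega
      have h2 := hβb (idx x) hix
      rwa [hbidx x hxa] at h2
  · intro x hx
    simp [hx]
  · simpa using hne
end

section
/- Let A and C be structures in the same relational language such that C is a model-complete core and there exists a homomorphism g : A → C. Then every homomorphism f : C → A is an embedding. -/
/-- `⟨C, R⟩` is a model-complete core: its endomorphisms are exactly the members of the
closure of its automorphism group in the topology of pointwise convergence. -/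
def ModelCompleteCore {ι : Type*} {ar : ι → ℕ} {C : Type*}
    (R : ∀ i, (Fin (ar i) → C) → Prop) : Prop :=
  {f : C → C | IsHomOn R R f} = @closure (C → C) (pwTop C) {f | IsAutoOn R f}

lemma pw_closure_agree {C : Type*} {S : Set (C → C)} {e : C → C}
    (he : e ∈ @closure _ (pwTop C) S) (F : Finset C) :
    ∃ s ∈ S, ∀ c ∈ F, s c = e c := by
  letI : TopologicalSpace C := ⊥
  letI : TopologicalSpace (C → C) := pwTop C
  have hU : IsOpen {h : C → C | ∀ c ∈ F, h c = e c} := by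
    have : {h : C → C | ∀ c ∈ F, h c = e c} = (F : Set C).pi (fun c => {e c}) := by
      ext h; simp [Set.pi]
    rw [this]
    exact isOpen_set_pi F.finite_toSet (fun c _ => by trivial)
  have := (mem_closure_iff.mp he) _ hU (fun c _ => rfl)
  obtain ⟨s, hs1, hs2⟩ := this
  exact ⟨s, hs2, hs1⟩

/-- If `C` is a model-complete core and there is a homomorphism `A → C`, then every
homomorphism `C → A` is an embedding (injective, and it preserves and reflects all
relations). -/
theorem stmt5 {ι A C : Type*} {ar : ι → ℕ}
    (RA : ∀ i, (Fin (ar i) → A) → Prop) (RC : ∀ i, (Fin (ar i) → C) → Prop)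
    (hcore : ModelCompleteCore RC)
    (g : A → C) (hg : IsHomOn RA RC g)
    (f : C → A) (hf : IsHomOn RC RA f) :
    Function.Injective f ∧ ∀ i x, RC i x ↔ RA i (fun j => f (x j)) := by
  classical
  have hend : IsHomOn RC RC (fun c => g (f c)) := fun i x h => hg i _ (hf i x h)
  have hcl : (fun c => g (f c)) ∈ @closure (C → C) (pwTop C) {h | IsAutoOn RC h} := by
    rw [← hcore]; exact hend
  constructor
  · intro a b hab
    obtain ⟨s, hs, hagree⟩ := pw_closure_agree hcl {a, b}
    have ha := hagree a (by simp)
    have hb := hagree b (by simp)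
    exact hs.1.injective (by rw [ha, hb, hab])
  · intro i x
    constructor
    · exact fun h => hf i x h
    · intro h
      obtain ⟨s, hs, hagree⟩ := pw_closure_agree hcl (Finset.image x Finset.univ)
      have hsx : (fun j => s (x j)) = fun j => g (f (x j)) := by
        funext j; exact hagree (x j) (Finset.mem_image_of_mem x (Finset.mem_univ j))
      have := (hs.2 i x).mpr
      rw [hsx] at this
      exact this (hg i _ h)
end

section
/- Let A be a countably infinite oligomorphic relational structure possessing an induced substructure C which is a model-complete core homomorphically equivalent to A. If A is weakly transitive, i.e., for all a, b ∈ A there exists s ∈ End(A) with s(a) = b (in particular, if Aut(A) acts transitively on A), then A has a mobile core. -/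
/-- The induced substructure of `⟨A, R⟩` on a subset `C ⊆ A`: each relation is restricted
to tuples from `C`. -/
def restrictRel {ι : Type*} {ar : ι → ℕ} {A : Type*}
    (R : ∀ i, (Fin (ar i) → A) → Prop) (C : Set A) :
    ∀ i, (Fin (ar i) → C) → Prop :=
  fun i x => R i (fun j => (x j : A))

/-- `⟨A, R⟩` has a mobile core: every `a ∈ A` lies in the image of an endomorphism of `A`
whose image is contained in an induced substructure of `A` which is a model-complete core
homomorphically equivalent to `A`. -/
def HasMobileCore {ι : Type*} {ar : ι → ℕ} {A : Type*}
    (R : ∀ i, (Fin (ar i) → A) → Prop) : Prop :=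
  ∀ a : A, ∃ (C : Set A) (g : A → A),
    ModelCompleteCore (restrictRel R C) ∧
    (∃ u : A → C, IsHomOn R (restrictRel R C) u) ∧
    (∃ v : C → A, IsHomOn (restrictRel R C) R v) ∧
    IsHomOn R R g ∧ a ∈ Set.range g ∧ Set.range g ⊆ C

lemma mem_closure_pw {C : Type*} (S : Set (C → C)) (f : C → C) :
    f ∈ @closure _ (pwTop C) S ↔ ∀ F : Finset C, ∃ g ∈ S, ∀ x ∈ F, g x = f x := by
  letI : TopologicalSpace C := ⊥
  haveI : DiscreteTopology C := ⟨rfl⟩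
  show f ∈ closure S ↔ _
  constructor
  · intro hf F
    have hU : IsOpen {g : C → C | ∀ x ∈ F, g x = f x} := by
      have : {g : C → C | ∀ x ∈ F, g x = f x} = ⋂ x ∈ F, (fun g : C → C => g x) ⁻¹' {f x} := by
        ext; simp
      rw [this]
      exact isOpen_biInter_finset fun x _ =>
        (isOpen_discrete {f x}).preimage (continuous_apply x)
    obtain ⟨g, hg1, hg2⟩ := mem_closure_iff.mp hf _ hU (by simp)
    exact ⟨g, hg2, hg1⟩
  · intro h
    rw [mem_closure_iff]
    intro o ho hfo
    rw [isOpen_pi_iff] at ho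
    obtain ⟨I, u, hu, hsub⟩ := ho f hfo
    obtain ⟨g, hgS, hg⟩ := h I
    exact ⟨g, hsub (fun x hx => by rw [hg x hx]; exact (hu x hx).2), hgS⟩

lemma mcc_iff {ι : Type*} {ar : ι → ℕ} {C : Type*}
    (R : ∀ i, (Fin (ar i) → C) → Prop) :
    ModelCompleteCore R ↔ ∀ f : C → C, IsHomOn R R f ↔
      ∀ F : Finset C, ∃ g, IsAutoOn R g ∧ ∀ x ∈ F, g x = f x := by
  unfold ModelCompleteCore
  rw [Set.ext_iff]
  refine forall_congr' fun f => ?_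
  rw [mem_closure_pw]
  simp only [Set.mem_setOf_eq, exists_prop]

lemma approx_hom {ι : Type*} {ar : ι → ℕ} {C : Type*}
    (R : ∀ i, (Fin (ar i) → C) → Prop) (f : C → C)
    (h : ∀ F : Finset C, ∃ g, IsAutoOn R g ∧ ∀ x ∈ F, g x = f x) :
    IsHomOn R R f := by
  classical
  intro i x hx
  obtain ⟨g, hg, hgf⟩ := h (Finset.image x Finset.univ)
  have : (fun j => f (x j)) = fun j => g (x j) :=
    funext fun j => (hgf (x j) (by simp)).symm
  rw [this]
  exact (hg.2 i x).mp hx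

lemma mcc_transfer {ι : Type*} {ar : ι → ℕ} {C D : Type*}
    (R : ∀ i, (Fin (ar i) → C) → Prop) (S : ∀ i, (Fin (ar i) → D) → Prop)
    (e : C ≃ D) (he : ∀ i x, R i x ↔ S i (fun j => e (x j)))
    (h : ModelCompleteCore R) : ModelCompleteCore S := by
  classical
  rw [mcc_iff] at h ⊢
  intro f
  constructor
  · intro hf F
    have hf' : IsHomOn R R (fun c => e.symm (f (e c))) := by
      intro i x hx
      rw [he]
      have hx2 := hf i (fun j => e (x j)) ((he i x).mp hx)
      simpa using hx2
    obtain ⟨g, hg, hgf⟩ := (h _).mp hf' (F.image e.symm)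
    refine ⟨fun d => e (g (e.symm d)), ⟨?_, ?_⟩, ?_⟩
    · exact e.bijective.comp (hg.1.comp e.symm.bijective)
    · intro i x
      have h1 := he i (fun j => e.symm (x j))
      have h2 := hg.2 i (fun j => e.symm (x j))
      have h3 := he i (fun j => g (e.symm (x j)))
      simp only [Equiv.apply_symm_apply] at h1
      rw [← h1, h2, h3]
    · intro x hx
      have h1 := hgf (e.symm x) (Finset.mem_image_of_mem _ hx)
      show e (g (e.symm x)) = f x
      rw [h1]
      simp
  · exact fun hap => approx_hom S f hap

/-- If a countably infinite oligomorphic structure `A` has an induced substructure which is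
a model-complete core homomorphically equivalent to `A`, and `A` is weakly transitive
(for all `a, b` there is an endomorphism sending `a` to `b`; in particular if `Aut(A)` is
transitive), then `A` has a mobile core. -/
theorem stmt7 {ι A : Type*} {ar : ι → ℕ} [Countable A] [Infinite A]
    (R : ∀ i, (Fin (ar i) → A) → Prop)
    (holig : Oligomorphic R)
    (C₀ : Set A)
    (hcore : ModelCompleteCore (restrictRel R C₀))
    (hu : ∃ u : A → C₀, IsHomOn R (restrictRel R C₀) u)
    (hv : ∃ v : C₀ → A, IsHomOn (restrictRel R C₀) R v)
    (htrans : ∀ a b : A, ∃ s : A → A, IsHomOn R R s ∧ s a = b) :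
    HasMobileCore R := by
  intro a
  classical
  obtain ⟨u, hu⟩ := hu
  obtain ⟨s, hs, hsb⟩ := htrans (↑(u a)) a
  set h0 : C₀ → C₀ := fun c => u (s ↑c) with hh0
  have hh0hom : IsHomOn (restrictRel R C₀) (restrictRel R C₀) h0 := by
    intro i x hx
    exact hu i (fun j => s ↑(x j)) (hs i (fun j => ↑(x j)) hx)
  have happ : ∀ F : Finset C₀, ∃ g, IsAutoOn (restrictRel R C₀) g ∧ ∀ x ∈ F, g x = h0 x :=
    ((mcc_iff _).mp hcore h0).mp hh0hom
  have hinj : Function.Injective h0 := by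
    intro c₁ c₂ hc
    obtain ⟨g, hg, hgf⟩ := happ {c₁, c₂}
    have e1 : g c₁ = h0 c₁ := hgf c₁ (by simp)
    have e2 : g c₂ = h0 c₂ := hgf c₂ (by simp)
    exact hg.1.1 (by rw [e1, e2, hc])
  have hsinj : Function.Injective (fun c : C₀ => s ↑c) := by
    intro c₁ c₂ hc
    apply hinj
    show u (s ↑c₁) = u (s ↑c₂)
    simp only at hc
    rw [hc]
  have hrefl : ∀ i (x : Fin (ar i) → C₀), R i (fun j => s ↑(x j)) → restrictRel R C₀ i x := by
    intro i x hx
    obtain ⟨g, hg, hgf⟩ := happ (Finset.image x Finset.univ)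
    have h1 : restrictRel R C₀ i (fun j => h0 (x j)) := hu i (fun j => s ↑(x j)) hx
    have h2 : (fun j => h0 (x j)) = fun j => g (x j) :=
      funext fun j => (hgf (x j) (by simp)).symm
    rw [h2] at h1
    exact (hg.2 i x).mpr h1
  refine ⟨Set.range (fun c : C₀ => s ↑c), fun x => s ↑(u x), ?_, ?_, ?_, ?_, ?_, ?_⟩
  · have hbij : Function.Bijective
        (fun c : C₀ => (⟨s ↑c, ⟨c, rfl⟩⟩ : Set.range (fun c : C₀ => s ↑c))) := by
      constructor
      · intro c₁ c₂ hc
        exact hsinj (congrArg Subtype.val hc)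
      · rintro ⟨y, c, rfl⟩
        exact ⟨c, rfl⟩
    refine mcc_transfer _ _ (Equiv.ofBijective _ hbij) ?_ hcore
    intro i x
    show restrictRel R C₀ i x ↔ R i (fun j => s ↑(x j))
    exact ⟨fun hx => hs i _ hx, hrefl i x⟩
  · exact ⟨fun x => ⟨s ↑(u x), ⟨u x, rfl⟩⟩, fun i x hx => hs i _ (hu i x hx)⟩
  · exact ⟨Subtype.val, fun i x hx => hx⟩
  · exact fun i x hx => hs i _ (hu i x hx)
  · exact ⟨a, hsb⟩
  · rintro _ ⟨x, rfl⟩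
    exact ⟨u x, rfl⟩
end

section
/- Let M be the monoid, under composition, of all maps f : ℚ → ℚ such that a ≤ b implies f(a) ≤ f(b). Then the Zariski topology on M coincides with the topology of pointwise convergence on M; in particular, the topology of pointwise convergence is the coarsest Hausdorff semigroup topology on M. -/
/-- The monoid of all monotone self-maps of `ℚ` (the endomorphism monoid of `⟨ℚ, ≤⟩`),
as a submonoid of `Function.End ℚ`. -/
def monoEndQ : Submonoid (Function.End ℚ) where
  carrier := {f | Monotone f}
  one_mem' := monotone_id
  mul_mem' := fun hf hg => hf.comp hg

/-- `T` is a Hausdorff semigroup topology on the monoid `M`. -/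
def IsHausdorffSemigroupTopology {M : Type*} [Monoid M] (T : TopologicalSpace M) : Prop :=
  @T2Space M T ∧
    @Continuous (M × M) M (@instTopologicalSpaceProd M M T T) T (fun p => p.1 * p.2)

/-! Every Hausdorff semigroup topology makes the word maps `s ↦ φ(s)` continuous, so the
equalisers `{φ = ψ}` are closed and the topology is finer than the Zariski topology; the pointwise
topology is such a topology. Conversely, for the constant map `c_a` and the indicator `χ_U` of an
upper set `U` (both monotone), the word `χ_U · s · c_a` is the constant map with value `χ_U (s a)`.
Comparing it with `c_0` and `c_1` shows that `{s | s a ∈ U}` and `{s | s a ∉ U}` are Zariski-open;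
with `U = [b, ∞)` and `U = (b, ∞)` this makes the pointwise basic set `{s | s a = b}` Zariski-open. -/

open Topology

section WordEval

variable {S : Type*} [Monoid S] [TopologicalSpace S] [ContinuousMul S]

lemma Continuous.wordEval {X : Type*} [TopologicalSpace X] {s p₀ : X → S}
    (hs : Continuous s) (hp₀ : Continuous p₀) (ps : List S) :
    Continuous fun x => wordEval (s x) (p₀ x) ps := by
  induction ps generalizing p₀ with
  | nil => exact hp₀
  | cons q ps ih => exact ih (continuous_const.mul hs |>.mul hp₀)

lemma isClosed_setOf_wordEval_eq [T2Space S] (p₀ q₀ : S) (ps qs : List S) :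
    IsClosed {s : S | wordEval s p₀ ps = wordEval s q₀ qs} :=
  isClosed_eq (continuous_id.wordEval continuous_const ps)
    (continuous_id.wordEval continuous_const qs)

end WordEval

theorem IsHausdorffSemigroupTopology.le_zariskiTopology {S : Type*} [Monoid S]
    {T : TopologicalSpace S} (hT : IsHausdorffSemigroupTopology T) :
    T ≤ zariskiTopology S := by
  obtain ⟨hT2, hmul⟩ := hT
  have : ContinuousMul S := ⟨hmul⟩
  refine le_generateFrom ?_
  rintro _ ⟨p₀, ps, q₀, qs, rfl⟩
  exact (isClosed_setOf_wordEval_eq p₀ q₀ ps qs).isOpen_compl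

lemma continuous_comp_of_discreteTopology {A : Type*} [TopologicalSpace A] [DiscreteTopology A] :
    Continuous fun fg : (A → A) × (A → A) => fg.1 ∘ fg.2 := by
  have heval : Continuous fun fx : (A → A) × A => fx.1 fx.2 :=
    continuous_prod_of_discrete_right.2 fun a => continuous_apply a
  exact continuous_pi fun a =>
    heval.comp (continuous_fst.prodMk ((continuous_apply a).comp continuous_snd))

theorem isHausdorffSemigroupTopology_induced_pwTop {A : Type*} (S : Submonoid (Function.End A)) :
    IsHausdorffSemigroupTopology
      (TopologicalSpace.induced (fun s : S => (s.1 : A → A)) (pwTop A)) := by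
  let _ : TopologicalSpace A := ⊥
  have : DiscreteTopology A := ⟨rfl⟩
  let _ : TopologicalSpace S := TopologicalSpace.induced (fun s : S => (s.1 : A → A)) (pwTop A)
  have hval : Continuous (Y := A → A) fun s : S => s.1 := continuous_induced_dom
  have hemb : IsEmbedding (Y := A → A) fun s : S => s.1 := ⟨⟨rfl⟩, Subtype.val_injective⟩
  refine ⟨hemb.t2Space, continuous_induced_rng.2 ?_⟩
  exact continuous_comp_of_discreteTopology.comp
    ((hval.comp continuous_fst).prodMk (hval.comp continuous_snd))

namespace monoEndQ

def const (q : ℚ) : monoEndQ := ⟨fun _ => q, monotone_const⟩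

noncomputable def indicator {U : Set ℚ} (hU : IsUpperSet U) : monoEndQ :=
  ⟨U.indicator 1, fun x y hxy => by
    by_cases hx : x ∈ U
    · simp [Set.indicator_of_mem hx, Set.indicator_of_mem (hU hxy hx)]
    · simp only [Set.indicator_of_notMem hx]
      exact Set.indicator_nonneg (fun _ _ => zero_le_one) y⟩

lemma isOpen_setOf_indicator_apply_ne {U : Set ℚ} (hU : IsUpperSet U) (a c : ℚ) :
    IsOpen[zariskiTopology monoEndQ] {s : monoEndQ | U.indicator 1 (s.1 a) ≠ c} := by
  refine TopologicalSpace.GenerateOpen.basic _ ⟨const a, [indicator hU], const c, [], ?_⟩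
  refine Set.ext fun s => Iff.not ?_
  rw [Subtype.ext_iff]
  change _ ↔ (fun _ : ℚ => U.indicator 1 (s.1 a)) = fun _ => c
  exact ⟨fun h => funext fun _ => h, fun h => congrFun h 0⟩

lemma isOpen_setOf_apply_eq (a b : ℚ) :
    IsOpen[zariskiTopology monoEndQ] {s : monoEndQ | s.1 a = b} := by
  let _ : TopologicalSpace monoEndQ := zariskiTopology monoEndQ
  have h : {s : monoEndQ | s.1 a = b} =
      {s : monoEndQ | (Set.Ici b).indicator (1 : ℚ → ℚ) (s.1 a) ≠ 0} ∩
        {s : monoEndQ | (Set.Ioi b).indicator (1 : ℚ → ℚ) (s.1 a) ≠ 1} := by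
    refine Set.ext fun s => ?_
    simp only [Set.mem_ofPred_eq, Set.mem_inter_iff, Set.indicator_apply, Set.mem_Ici, Set.mem_Ioi,
      Pi.one_apply]
    split_ifs <;> grind
  rw [h]
  exact (isOpen_setOf_indicator_apply_ne (isUpperSet_Ici b) a 0).inter
    (isOpen_setOf_indicator_apply_ne (isUpperSet_Ioi b) a 1)

lemma zariskiTopology_le_induced_pwTop :
    zariskiTopology monoEndQ ≤
      TopologicalSpace.induced (fun s : monoEndQ => (s.1 : ℚ → ℚ)) (pwTop ℚ) := by
  let _ : TopologicalSpace ℚ := ⊥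
  have : DiscreteTopology ℚ := ⟨rfl⟩
  let _ : TopologicalSpace monoEndQ := zariskiTopology monoEndQ
  exact continuous_iff_le_induced.1 <|
    continuous_pi fun a => continuous_discrete_rng.2 fun b => isOpen_setOf_apply_eq a b

end monoEndQ

/-- On the monoid of monotone self-maps of `ℚ` under composition, the Zariski topology
coincides with the topology of pointwise convergence; in particular the pointwise topology
is the coarsest Hausdorff semigroup topology. -/
theorem stmt9 :
    zariskiTopology ↥monoEndQ =
        TopologicalSpace.induced (fun s : ↥monoEndQ => (s.1 : ℚ → ℚ)) (pwTop ℚ) ∧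
    IsHausdorffSemigroupTopology
        (TopologicalSpace.induced (fun s : ↥monoEndQ => (s.1 : ℚ → ℚ)) (pwTop ℚ)) ∧
    ∀ T : TopologicalSpace ↥monoEndQ, IsHausdorffSemigroupTopology T →
      T ≤ TopologicalSpace.induced (fun s : ↥monoEndQ => (s.1 : ℚ → ℚ)) (pwTop ℚ) := by
  have hpw := isHausdorffSemigroupTopology_induced_pwTop monoEndQ
  have hzar := le_antisymm monoEndQ.zariskiTopology_le_induced_pwTop hpw.le_zariskiTopology
  exact ⟨hzar, hpw, fun T hT => hzar ▸ hT.le_zariskiTopology⟩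
end

section
/- Let M be the monoid, under composition, of all maps f : ℚ → ℚ such that a < b implies f(a) < f(b) (strictly increasing maps). Then the Zariski topology on M coincides with the topology of pointwise convergence on M; in particular, the topology of pointwise convergence is the coarsest Hausdorff semigroup topology on M. -/
/-- The monoid of all strictly increasing self-maps of `ℚ` (the endomorphism monoid of `⟨ℚ, <⟩`),
as a submonoid of `Function.End ℚ`. -/
def strictMonoEndQ : Submonoid (Function.End ℚ) where
  carrier := {f | StrictMono f}
  one_mem' := strictMono_id
  mul_mem' := fun hf hg => hf.comp hg

open Set Function Topology

theorem le_zariskiTopology_of_isHausdorffSemigroupTopology {S : Type*} [Monoid S]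
    (T : TopologicalSpace S) (hT : IsHausdorffSemigroupTopology T) : T ≤ zariskiTopology S := by
  let _ := T
  obtain ⟨_, hmul⟩ := hT
  have : ContinuousMul S := ⟨hmul⟩
  have continuous_foldl : ∀ (qs : List S) (c : S → S), Continuous c →
      Continuous fun s => qs.foldl (fun acc q => q * s * acc) (c s) := by
    intro qs
    induction qs with
    | nil => exact fun _ hc => hc
    | cons q qs ih => exact fun c hc => ih _ ((continuous_const.mul continuous_id).mul hc)
  refine le_generateFrom ?_
  rintro U ⟨p₀, ps, q₀, qs, rfl⟩
  exact (isClosed_eq (continuous_foldl ps _ continuous_const)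
    (continuous_foldl qs _ continuous_const)).isOpen_compl

theorem continuous_comp_pwTop :
    @Continuous _ _ (@instTopologicalSpaceProd _ _ (pwTop ℚ) (pwTop ℚ)) (pwTop ℚ)
      (fun p : (ℚ → ℚ) × (ℚ → ℚ) => p.1 ∘ p.2) := by
  let _ : TopologicalSpace ℚ := ⊥
  have _ : DiscreteTopology ℚ := ⟨rfl⟩
  have continuous_eval : Continuous fun p : (ℚ → ℚ) × ℚ => p.1 p.2 :=
    continuous_prod_of_discrete_right.2 continuous_apply
  exact continuous_pi fun x =>
    continuous_eval.comp (continuous_fst.prodMk ((continuous_apply x).comp continuous_snd))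

theorem isHausdorffSemigroupTopology_pointwise :
    IsHausdorffSemigroupTopology
      (TopologicalSpace.induced (fun s : ↥strictMonoEndQ => (s.1 : ℚ → ℚ)) (pwTop ℚ)) := by
  let _ : TopologicalSpace ℚ := ⊥
  have _ : DiscreteTopology ℚ := ⟨rfl⟩
  let _ : TopologicalSpace ↥strictMonoEndQ := .induced (fun s => (s.1 : ℚ → ℚ)) (pwTop ℚ)
  have hemb : @IsEmbedding _ (ℚ → ℚ) _ _ fun s : ↥strictMonoEndQ => s.1 :=
    ⟨⟨rfl⟩, fun _ _ => Subtype.ext⟩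
  refine ⟨hemb.t2Space, continuous_induced_rng.2 ?_⟩
  exact continuous_comp_pwTop.comp
    ((hemb.continuous.comp continuous_fst).prodMk (hemb.continuous.comp continuous_snd))

theorem apply_eq_iff_mem_range_comp_and {α β : Type*} {f : α → β} (hf : Injective f)
    {g h : α → α} {a : α} (hgh : range g ∩ range h = {a}) (b : β) :
    f a = b ↔ b ∈ range (f ∘ g) ∧ b ∈ range (f ∘ h) := by
  rw [range_comp, range_comp, ← mem_inter_iff, ← image_inter hf, hgh, image_singleton,
    mem_singleton_iff, eq_comm]

def shiftGt (b : ℚ) (y : ℚ) : ℚ := if y ≤ b then y else y + 1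

def shiftGe (b : ℚ) (y : ℚ) : ℚ := if y < b then y else y + 1

theorem strictMono_shiftGt (b : ℚ) : StrictMono (shiftGt b) := by
  intro x y hxy
  unfold shiftGt
  split_ifs <;> linarith

theorem strictMono_shiftGe (b : ℚ) : StrictMono (shiftGe b) := by
  intro x y hxy
  unfold shiftGe
  split_ifs <;> linarith

theorem shiftGt_ne_shiftGe_iff (b y : ℚ) : shiftGt b y ≠ shiftGe b y ↔ y = b := by
  unfold shiftGt shiftGe
  rcases lt_trichotomy y b with h | rfl | h
  · simp [h.le, h, h.ne]
  · simp
  · simp [h.not_ge, h.not_gt, h.ne']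

theorem isOpen_zariskiTopology_setOf_mem_range (r : ↥strictMonoEndQ) (b : ℚ) :
    IsOpen[zariskiTopology ↥strictMonoEndQ] {s | b ∈ range (s.1 ∘ r.1)} := by
  let m : ↥strictMonoEndQ := ⟨shiftGt b, strictMono_shiftGt b⟩
  let n : ↥strictMonoEndQ := ⟨shiftGe b, strictMono_shiftGe b⟩
  have : {s : ↥strictMonoEndQ | b ∈ range (s.1 ∘ r.1)} =
      {s | wordEval s r [m] ≠ wordEval s r [n]} := by
    ext s
    change (∃ x, s.1 (r.1 x) = b) ↔ m * s * r ≠ n * s * r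
    rw [Ne, Subtype.ext_iff]
    change _ ↔ ¬(fun x => shiftGt b (s.1 (r.1 x))) = fun x => shiftGe b (s.1 (r.1 x))
    rw [funext_iff, not_forall]
    exact exists_congr fun x => (shiftGt_ne_shiftGe_iff b (s.1 (r.1 x))).symm
  rw [this]
  exact .basic _ ⟨r, [m], r, [n], rfl⟩

/-- Its range lies in `(a - 1, a] ∪ (a + 1, ∞)` and that of its mirror image `squashRight a` in
`(-∞, a - 1) ∪ [a, a + 1)`, so the two ranges meet only in `a`. -/
def squashLeft (a x : ℚ) : ℚ := if x ≤ a then a - 1 + 1 / (1 + a - x) else x + 1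

def squashRight (a x : ℚ) : ℚ := 2 * a - squashLeft a (2 * a - x)

theorem squashLeft_self (a : ℚ) : squashLeft a a = a := by
  simp [squashLeft]

theorem squashLeft_mem_Ioc {a x : ℚ} (hx : x ≤ a) : squashLeft a x ∈ Ioc (a - 1) a := by
  have hpos : 0 < 1 + a - x := by linarith
  have hle : 1 / (1 + a - x) ≤ 1 := by rw [div_le_one hpos]; linarith
  rw [squashLeft, if_pos hx]
  constructor <;> linarith [one_div_pos.2 hpos]

theorem squashLeft_mem (a x : ℚ) : squashLeft a x ∈ Ioc (a - 1) a ∪ Ioi (a + 1) := by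
  by_cases hx : x ≤ a
  · exact .inl (squashLeft_mem_Ioc hx)
  · right
    rw [squashLeft, if_neg hx, mem_Ioi]
    linarith [not_le.1 hx]

theorem strictMono_squashLeft (a : ℚ) : StrictMono (squashLeft a) := by
  intro x y hxy
  by_cases hy : y ≤ a
  · rw [squashLeft, squashLeft, if_pos (hxy.le.trans hy), if_pos hy]
    have := one_div_lt_one_div_of_lt (by linarith : 0 < 1 + a - y)
      (by linarith : 1 + a - y < 1 + a - x)
    linarith
  · have hy' : squashLeft a y = y + 1 := if_neg hy
    by_cases hx : x ≤ a
    · linarith [(squashLeft_mem_Ioc hx).2, not_le.1 hy]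
    · have hx' : squashLeft a x = x + 1 := if_neg hx
      linarith

theorem strictMono_squashRight (a : ℚ) : StrictMono (squashRight a) := fun x y hxy => by
  have := strictMono_squashLeft a (by linarith : 2 * a - y < 2 * a - x)
  unfold squashRight
  linarith

theorem range_squashLeft_inter_range_squashRight (a : ℚ) :
    range (squashLeft a) ∩ range (squashRight a) = {a} := by
  refine subset_antisymm ?_ (singleton_subset_iff.2 ⟨⟨a, squashLeft_self a⟩, a, ?_⟩)
  · rintro _ ⟨⟨x, rfl⟩, y, hy⟩
    rw [squashRight] at hy
    rw [mem_singleton_iff]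
    rcases squashLeft_mem a x with ⟨h₁, h₂⟩ | (h₁ : a + 1 < _) <;>
      rcases squashLeft_mem a (2 * a - y) with ⟨h₃, h₄⟩ | (h₃ : a + 1 < _) <;> linarith
  · simp [squashRight, two_mul, squashLeft_self]

theorem isOpen_zariskiTopology_setOf_apply_eq (a b : ℚ) :
    IsOpen[zariskiTopology ↥strictMonoEndQ] {s | s.1 a = b} := by
  let r₁ : ↥strictMonoEndQ := ⟨squashLeft a, strictMono_squashLeft a⟩
  let r₂ : ↥strictMonoEndQ := ⟨squashRight a, strictMono_squashRight a⟩
  have : {s : ↥strictMonoEndQ | s.1 a = b} =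
      {s | b ∈ range (s.1 ∘ r₁.1)} ∩ {s | b ∈ range (s.1 ∘ r₂.1)} := by
    ext s
    exact apply_eq_iff_mem_range_comp_and (s.2 : StrictMono s.1).injective
      (range_squashLeft_inter_range_squashRight a) b
  rw [this]
  let _ := zariskiTopology ↥strictMonoEndQ
  exact (isOpen_zariskiTopology_setOf_mem_range r₁ b).inter
    (isOpen_zariskiTopology_setOf_mem_range r₂ b)

theorem zariskiTopology_le_pointwise :
    zariskiTopology ↥strictMonoEndQ ≤
      TopologicalSpace.induced (fun s : ↥strictMonoEndQ => (s.1 : ℚ → ℚ)) (pwTop ℚ) := by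
  let _ : TopologicalSpace ℚ := ⊥
  have _ : DiscreteTopology ℚ := ⟨rfl⟩
  let _ := zariskiTopology ↥strictMonoEndQ
  have : @Continuous ↥strictMonoEndQ (ℚ → ℚ) _ (pwTop ℚ) (fun s => s.1) :=
    continuous_pi fun a => continuous_discrete_rng.2 fun b =>
      isOpen_zariskiTopology_setOf_apply_eq a b
  exact continuous_iff_le_induced.1 this

/-- On the monoid of strictly increasing self-maps of `ℚ` under composition, the Zariski topology
coincides with the topology of pointwise convergence; in particular the pointwise topology
is the coarsest Hausdorff semigroup topology. -/
theorem stmt10 :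
    zariskiTopology ↥strictMonoEndQ =
        TopologicalSpace.induced (fun s : ↥strictMonoEndQ => (s.1 : ℚ → ℚ)) (pwTop ℚ) ∧
    IsHausdorffSemigroupTopology
        (TopologicalSpace.induced (fun s : ↥strictMonoEndQ => (s.1 : ℚ → ℚ)) (pwTop ℚ)) ∧
    ∀ T : TopologicalSpace ↥strictMonoEndQ, IsHausdorffSemigroupTopology T →
      T ≤ TopologicalSpace.induced (fun s : ↥strictMonoEndQ => (s.1 : ℚ → ℚ)) (pwTop ℚ) := by
  have hZ := le_antisymm zariskiTopology_le_pointwise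
    (le_zariskiTopology_of_isHausdorffSemigroupTopology _ isHausdorffSemigroupTopology_pointwise)
  exact ⟨hZ, isHausdorffSemigroupTopology_pointwise,
    fun T hT => hZ ▸ le_zariskiTopology_of_isHausdorffSemigroupTopology T hT⟩
end

section
/- Let B be a countably infinite relational structure without algebraicity and let b ∈ B. Then there exist functions f and h in the closure of Aut(B), taken inside the space of all functions B → B with the topology of pointwise convergence, such that f(b) = b = h(b) and range(f) ∩ range(h) = {b}. -/
lemma isAutoOn_id' {ι B : Type*} {ar : ι → ℕ} (R : ∀ i, (Fin (ar i) → B) → Prop) :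
    IsAutoOn R (id : B → B) :=
  ⟨Function.bijective_id, fun _ _ => Iff.rfl⟩

lemma isAutoOn_comp' {ι B : Type*} {ar : ι → ℕ} {R : ∀ i, (Fin (ar i) → B) → Prop}
    {g f : B → B} (hg : IsAutoOn R g) (hf : IsAutoOn R f) :
    IsAutoOn R (fun x => g (f x)) :=
  ⟨hg.1.comp hf.1, fun i x => (hf.2 i x).trans (hg.2 i (fun j => f (x j)))⟩

/-- Core extension lemma: an automorphism can be modified off a finite set `Y`
so that a prescribed point `a ∉ Y` avoids a finite forbidden set `F`. -/
lemma extend_auto {ι B : Type*} {ar : ι → ℕ} {R : ∀ i, (Fin (ar i) → B) → Prop}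
    (halg : NoAlgebraicity R) {α : B → B} (hα : IsAutoOn R α)
    (Y : Finset B) {a : B} (ha : a ∉ Y) (F : Finset B) :
    ∃ β, IsAutoOn R β ∧ (∀ y ∈ Y, β y = α y) ∧ β a ∉ F := by
  classical
  have ha' : α a ∉ Y.image α := by
    intro hmem
    obtain ⟨y, hy, hya⟩ := Finset.mem_image.1 hmem
    exact ha (by rwa [hα.1.injective hya] at hy)
  have hinf := halg (Y.image α) (α a) ha'
  obtain ⟨c, hc, hcF⟩ := hinf.exists_notMem_finset F
  obtain ⟨g, hg, hgfix, hgc⟩ := hc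
  refine ⟨fun x => g (α x), isAutoOn_comp' hg hα, ?_, ?_⟩
  · intro y hy
    exact hgfix (α y) (Finset.mem_image_of_mem α hy)
  · show g (α a) ∉ F
    rwa [hgc]

/-- One step of the simultaneous back-and-forth construction. -/
lemma step_auto {ι B : Type*} {ar : ι → ℕ} {R : ∀ i, (Fin (ar i) → B) → Prop}
    (halg : NoAlgebraicity R) (s : ℕ → B) (n : ℕ) {α γ : B → B}
    (hα : IsAutoOn R α) (hγ : IsAutoOn R γ) :
    ∃ α' γ', IsAutoOn R α' ∧ IsAutoOn R γ' ∧
      (∀ k ≤ n, α' (s k) = α (s k)) ∧ (∀ k ≤ n, γ' (s k) = γ (s k)) ∧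
      ((∀ k ≤ n, s k ≠ s (n+1)) →
        (∀ k ≤ n, α' (s (n+1)) ≠ γ (s k)) ∧
        (∀ k ≤ n+1, γ' (s (n+1)) ≠ α' (s k))) := by
  classical
  by_cases hnew : ∀ k ≤ n, s k ≠ s (n+1)
  · set Y : Finset B := (Finset.range (n+1)).image s with hY
    have haY : s (n+1) ∉ Y := by
      intro hmem
      obtain ⟨k, hk, hks⟩ := Finset.mem_image.1 hmem
      exact hnew k (Nat.lt_succ_iff.1 (Finset.mem_range.1 hk)) hks
    obtain ⟨α', hα', hα'Y, hα'F⟩ :=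
      extend_auto halg hα Y haY ((Finset.range (n+1)).image (fun k => γ (s k)))
    obtain ⟨γ', hγ', hγ'Y, hγ'F⟩ :=
      extend_auto halg hγ Y haY ((Finset.range (n+2)).image (fun k => α' (s k)))
    have memY : ∀ k ≤ n, s k ∈ Y := fun k hk =>
      Finset.mem_image_of_mem s (Finset.mem_range.2 (Nat.lt_succ_of_le hk))
    refine ⟨α', γ', hα', hγ', fun k hk => hα'Y (s k) (memY k hk),
      fun k hk => hγ'Y (s k) (memY k hk), fun _ => ⟨?_, ?_⟩⟩
    · intro k hk hEq
      exact hα'F (Finset.mem_image.2 ⟨k, Finset.mem_range.2 (Nat.lt_succ_of_le hk), hEq.symm⟩)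
    · intro k hk hEq
      exact hγ'F (Finset.mem_image.2 ⟨k, Finset.mem_range.2 (Nat.lt_succ_of_le hk), hEq.symm⟩)
  · exact ⟨α, γ, hα, hγ, fun _ _ => rfl, fun _ _ => rfl, fun h => absurd h hnew⟩

/-- For a countably infinite structure `B` without algebraicity and `b ∈ B`, there are two
maps `f, h` in the pointwise closure of `Aut(B)` fixing `b` whose ranges meet only in `b`. -/
theorem stmt12 {ι B : Type*} {ar : ι → ℕ} [Countable B] [Infinite B]
    (R : ∀ i, (Fin (ar i) → B) → Prop)
    (halg : NoAlgebraicity R) (b : B) :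
    ∃ f h : B → B,
      f ∈ @closure (B → B) (pwTop B) {g | IsAutoOn R g} ∧
      h ∈ @closure (B → B) (pwTop B) {g | IsAutoOn R g} ∧
      f b = b ∧ h b = b ∧ Set.range f ∩ Set.range h = {b} := by
  classical
  -- an enumeration of B starting with b
  obtain ⟨dB⟩ := nonempty_denumerable B
  let e : B ≃ ℕ := Denumerable.eqv B
  let s : ℕ → B := fun n => Nat.rec b (fun m _ => e.symm m) n
  have hs0 : s 0 = b := rfl
  have hs : ∀ x : B, ∃ n, s n = x := fun x => ⟨e x + 1, e.symm_apply_apply x⟩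
  -- the inductive construction
  have hstep : ∀ (n : ℕ) (p : {p : (B → B) × (B → B) // IsAutoOn R p.1 ∧ IsAutoOn R p.2}),
      ∃ q : {p : (B → B) × (B → B) // IsAutoOn R p.1 ∧ IsAutoOn R p.2},
        (∀ k ≤ n, q.1.1 (s k) = p.1.1 (s k)) ∧ (∀ k ≤ n, q.1.2 (s k) = p.1.2 (s k)) ∧
        ((∀ k ≤ n, s k ≠ s (n+1)) →
          (∀ k ≤ n, q.1.1 (s (n+1)) ≠ p.1.2 (s k)) ∧
          (∀ k ≤ n+1, q.1.2 (s (n+1)) ≠ q.1.1 (s k))) := by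
    intro n p
    obtain ⟨α', γ', h1, h2, h3, h4, h5⟩ := step_auto halg s n p.2.1 p.2.2
    exact ⟨⟨(α', γ'), h1, h2⟩, h3, h4, h5⟩
  choose step hstep1 hstep2 hstep3 using hstep
  let seq : ℕ → {p : (B → B) × (B → B) // IsAutoOn R p.1 ∧ IsAutoOn R p.2} :=
    fun n => Nat.rec ⟨(id, id), isAutoOn_id' R, isAutoOn_id' R⟩ step n
  have hseq : ∀ n, seq (n+1) = step n (seq n) := fun n => rfl
  have agA : ∀ n, ∀ k ≤ n, (seq (n+1)).1.1 (s k) = (seq n).1.1 (s k) := by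
    intro n k hk; rw [hseq n]; exact hstep1 n (seq n) k hk
  have agC : ∀ n, ∀ k ≤ n, (seq (n+1)).1.2 (s k) = (seq n).1.2 (s k) := by
    intro n k hk; rw [hseq n]; exact hstep2 n (seq n) k hk
  have guard : ∀ n, (∀ k ≤ n, s k ≠ s (n+1)) →
      (∀ k ≤ n, (seq (n+1)).1.1 (s (n+1)) ≠ (seq n).1.2 (s k)) ∧
      (∀ k ≤ n+1, (seq (n+1)).1.2 (s (n+1)) ≠ (seq (n+1)).1.1 (s k)) := by
    intro n hn; rw [hseq n]; exact hstep3 n (seq n) hn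
  have stabA : ∀ k n m, k ≤ n → n ≤ m → (seq m).1.1 (s k) = (seq n).1.1 (s k) := by
    intro k n m hk hnm
    induction m, hnm using Nat.le_induction with
    | base => rfl
    | succ m hm ih => rw [agA m k (hk.trans hm), ih]
  have stabC : ∀ k n m, k ≤ n → n ≤ m → (seq m).1.2 (s k) = (seq n).1.2 (s k) := by
    intro k n m hk hnm
    induction m, hnm using Nat.le_induction with
    | base => rfl
    | succ m hm ih => rw [agC m k (hk.trans hm), ih]
  -- definition of f and h as pointwise limits
  let N : B → ℕ := fun x => @Nat.find _ (Classical.decPred _) (hs x)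
  have hN : ∀ x, s (N x) = x := fun x => @Nat.find_spec _ (Classical.decPred _) (hs x)
  have hNmin : ∀ x k, k < N x → s k ≠ x := fun x k hk => @Nat.find_min _ (Classical.decPred _) (hs x) _ hk
  have hNb : N b = 0 := (@Nat.find_eq_zero _ (Classical.decPred _) (hs b)).2 hs0
  let f : B → B := fun x => (seq (N x)).1.1 x
  let h : B → B := fun x => (seq (N x)).1.2 x
  have hfb : f b = b := by show (seq (N b)).1.1 b = b; rw [hNb]; rfl
  have hhb : h b = b := by show (seq (N b)).1.2 b = b; rw [hNb]; rfl
  have hconvA : ∀ x, ∀ n, N x ≤ n → (seq n).1.1 x = f x := by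
    intro x n hn
    show (seq n).1.1 x = (seq (N x)).1.1 x
    have := stabA (N x) (N x) n le_rfl hn
    rwa [hN x] at this
  have hconvC : ∀ x, ∀ n, N x ≤ n → (seq n).1.2 x = h x := by
    intro x n hn
    show (seq n).1.2 x = (seq (N x)).1.2 x
    have := stabC (N x) (N x) n le_rfl hn
    rwa [hN x] at this
  -- closure membership
  have mem_cl : ∀ (F : ℕ → B → B) (g : B → B), (∀ n, IsAutoOn R (F n)) →
      (∀ x, ∀ n, N x ≤ n → F n x = g x) →
      g ∈ @closure (B → B) (pwTop B) {g | IsAutoOn R g} := by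
    intro F g hF hconv
    letI : TopologicalSpace B := ⊥
    haveI : DiscreteTopology B := ⟨rfl⟩
    letI : TopologicalSpace (B → B) := pwTop B
    have htend : @Filter.Tendsto ℕ (B → B) F Filter.atTop (@nhds _ (pwTop B) g) := by
      rw [show pwTop B = @Pi.topologicalSpace B (fun _ => B) (fun _ => ⊥) from rfl]
      rw [tendsto_pi_nhds]
      intro x
      rw [nhds_discrete, Filter.tendsto_pure]
      exact Filter.eventually_atTop.2 ⟨N x, hconv x⟩
    exact mem_closure_of_tendsto htend (Filter.Eventually.of_forall hF)
  refine ⟨f, h, mem_cl (fun n => (seq n).1.1) f (fun n => (seq n).2.1) hconvA,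
    mem_cl (fun n => (seq n).1.2) h (fun n => (seq n).2.2) hconvC, hfb, hhb, ?_⟩
  -- range intersection
  apply Set.eq_singleton_iff_unique_mem.2
  constructor
  · exact ⟨⟨b, hfb⟩, ⟨b, hhb⟩⟩
  · rintro v ⟨⟨x, hx⟩, ⟨y, hy⟩⟩
    by_cases hxb : x = b
    · rw [← hx, hxb, hfb]
    by_cases hyb : y = b
    · rw [← hy, hyb, hhb]
    exfalso
    have hi0 : N x ≠ 0 := fun h0 => hxb (by rw [← hN x, h0, hs0])
    have hj0 : N y ≠ 0 := fun h0 => hyb (by rw [← hN y, h0, hs0])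
    rcases le_or_gt (N x) (N y) with hij | hij
    · -- N y = m + 1, h y avoids all f-values through stage N y
      obtain ⟨m, hm⟩ : ∃ m, N y = m + 1 := ⟨N y - 1, by omega⟩
      have hguard : ∀ k ≤ m, s k ≠ s (m+1) := by
        intro k hk
        rw [← hm, hN y]
        exact hNmin y k (by omega)
      obtain ⟨_, h2⟩ := guard m hguard
      have := h2 (N x) (by omega)
      apply this
      · -- (seq (m+1)).1.2 (s (m+1)) = v and (seq (m+1)).1.1 (s (N x)) = v
        have e1 : (seq (m+1)).1.2 (s (m+1)) = v := by
          rw [← hm, hN y, hconvC y (N y) le_rfl, hy]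
        have e2 : (seq (m+1)).1.1 (s (N x)) = v := by
          rw [hN x, hconvA x (m+1) (by omega), hx]
        rw [e1, e2]
    · -- N x = m + 1 > N y; f x avoids all h-values through stage N y ≤ m
      obtain ⟨m, hm⟩ : ∃ m, N x = m + 1 := ⟨N x - 1, by omega⟩
      have hguard : ∀ k ≤ m, s k ≠ s (m+1) := by
        intro k hk
        rw [← hm, hN x]
        exact hNmin x k (by omega)
      obtain ⟨h1, _⟩ := guard m hguard
      have := h1 (N y) (by omega)
      apply this
      have e1 : (seq (m+1)).1.1 (s (m+1)) = v := by
        rw [← hm, hN x, hconvA x (N x) le_rfl, hx]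
      have e2 : (seq m).1.2 (s (N y)) = v := by
        rw [hN y, hconvC y m (by omega), hy]
      rw [e1, e2]
end

section
/- End(𝔾) is exactly the set of maps of the form ⊔^τ s_i where τ : ℕ → ℕ is injective and each s_i is an endomorphism of K_{2,ω}; and Aut(𝔾) is exactly the set of maps of the form ⊔^σ α_i where σ is a permutation of ℕ and each α_i is an automorphism of K_{2,ω}. -/
/-- The vertex set of the complete bipartite graph `K_{2,ω}`: two disjoint countably
infinite parts, `A₊ = Sum.inl ℕ` and `A₋ = Sum.inr ℕ`. -/
abbrev Kdom : Type := ℕ ⊕ ℕ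

/-- The edge relation of `K_{2,ω}`: two vertices are adjacent iff they lie in
different parts. -/
def Kedge (x y : Kdom) : Prop := x.isLeft ≠ y.isLeft

/-- Endomorphisms of `K_{2,ω}`: edge-preserving self-maps. -/
def KEnd (f : Kdom → Kdom) : Prop := ∀ x y, Kedge x y → Kedge (f x) (f y)

/-- Automorphisms of `K_{2,ω}`: edge-preserving-and-reflecting bijections. -/
def KAut (f : Kdom → Kdom) : Prop :=
  Function.Bijective f ∧ ∀ x y, Kedge x y ↔ Kedge (f x) (f y)

/-- The domain of the structure `𝔾`: countably many copies of `K_{2,ω}`. -/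
abbrev Gdom : Type := ℕ × Kdom

/-- `E₁((i,x),(j,y))` iff `i ≠ j`. -/
def E1 (a b : Gdom) : Prop := a.1 ≠ b.1

/-- `E₂((i,x),(j,y))` iff `i = j` and `x`, `y` are adjacent in `K_{2,ω}`. -/
def E2 (a b : Gdom) : Prop := a.1 = b.1 ∧ Kedge a.2 b.2

/-- Endomorphisms of `𝔾`: maps preserving `E₁` and `E₂`. -/
def GEnd (f : Gdom → Gdom) : Prop :=
  (∀ a b, E1 a b → E1 (f a) (f b)) ∧ (∀ a b, E2 a b → E2 (f a) (f b))

/-- Automorphisms of `𝔾`: bijections preserving and reflecting `E₁` and `E₂`. -/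
def GAut (f : Gdom → Gdom) : Prop :=
  Function.Bijective f ∧ (∀ a b, E1 a b ↔ E1 (f a) (f b)) ∧
    (∀ a b, E2 a b ↔ E2 (f a) (f b))

/-- `⊔^τ sᵢ : (i,x) ↦ (τ(i), sᵢ(x))`. -/
def sqcup (τ : ℕ → ℕ) (s : ℕ → Kdom → Kdom) : Gdom → Gdom :=
  fun p => (τ p.1, s p.1 p.2)

lemma decompEnd (f : Gdom → Gdom) (hf : GEnd f) :
    ∃ (τ : ℕ → ℕ) (s : ℕ → Kdom → Kdom),
      Function.Injective τ ∧ (∀ i, KEnd (s i)) ∧ f = sqcup τ s := by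
  obtain ⟨h1, h2⟩ := hf
  have hadj : ∀ i (x y : Kdom), Kedge x y → (f (i, x)).1 = (f (i, y)).1 := by
    intro i x y h
    exact (h2 (i, x) (i, y) ⟨rfl, h⟩).1
  have hsame : ∀ i (x : Kdom), (f (i, x)).1 = (f (i, Sum.inr 0)).1 := by
    intro i x
    rcases x with a | a
    · exact hadj i _ _ (by simp [Kedge])
    · calc (f (i, Sum.inr a)).1 = (f (i, Sum.inl 0)).1 :=
            hadj i _ _ (by simp [Kedge])
        _ = (f (i, Sum.inr 0)).1 := hadj i _ _ (by simp [Kedge])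
  refine ⟨fun i => (f (i, Sum.inr 0)).1, fun i x => (f (i, x)).2, ?_, ?_, ?_⟩
  · intro i j hij
    by_contra hne
    exact h1 (i, Sum.inr 0) (j, Sum.inr 0) hne hij
  · intro i x y h
    exact (h2 (i, x) (i, y) ⟨rfl, h⟩).2
  · funext p
    rcases p with ⟨i, x⟩
    exact Prod.ext (hsame i x) rfl

/-- `End(𝔾)` consists exactly of the maps `⊔^τ sᵢ` with `τ : ℕ → ℕ` injective and each
`sᵢ` an endomorphism of `K_{2,ω}`; `Aut(𝔾)` consists exactly of the maps `⊔^σ αᵢ` with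
`σ` a permutation of `ℕ` and each `αᵢ` an automorphism of `K_{2,ω}`. -/
theorem stmt13 :
    ({f : Gdom → Gdom | GEnd f} =
      {f : Gdom → Gdom | ∃ (τ : ℕ → ℕ) (s : ℕ → Kdom → Kdom),
        Function.Injective τ ∧ (∀ i, KEnd (s i)) ∧ f = sqcup τ s}) ∧
    ({f : Gdom → Gdom | GAut f} =
      {f : Gdom → Gdom | ∃ (σ : ℕ → ℕ) (α : ℕ → Kdom → Kdom),
        Function.Bijective σ ∧ (∀ i, KAut (α i)) ∧ f = sqcup σ α}) := by
  constructor
  · ext f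
    simp only [Set.mem_setOf_eq]
    constructor
    · exact decompEnd f
    · rintro ⟨τ, s, hτ, hs, rfl⟩
      constructor
      · rintro ⟨i, x⟩ ⟨j, y⟩ h
        exact fun hc => h (hτ hc)
      · rintro ⟨i, x⟩ ⟨j, y⟩ ⟨h, he⟩
        cases h
        exact ⟨rfl, hs i x y he⟩
  · ext f
    simp only [Set.mem_setOf_eq]
    constructor
    · rintro ⟨hbij, hE1, hE2⟩
      obtain ⟨τ, s, hτ, hs, rfl⟩ :=
        decompEnd f ⟨fun a b => (hE1 a b).1, fun a b => (hE2 a b).1⟩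
      refine ⟨τ, s, ⟨hτ, ?_⟩, ?_, rfl⟩
      · intro j
        obtain ⟨⟨i, x⟩, hx⟩ := hbij.2 (j, Sum.inr 0)
        exact ⟨i, congrArg Prod.fst hx⟩
      · intro i
        refine ⟨⟨?_, ?_⟩, ?_⟩
        · intro x y hxy
          have : sqcup τ s (i, x) = sqcup τ s (i, y) := by
            simp [sqcup, hxy]
          exact congrArg Prod.snd (hbij.1 this)
        · intro y
          obtain ⟨⟨i', x⟩, hx⟩ := hbij.2 (τ i, y)
          have h1 : τ i' = τ i := congrArg Prod.fst hx
          have : i' = i := hτ h1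
          subst this
          exact ⟨x, congrArg Prod.snd hx⟩
        · intro x y
          have := hE2 (i, x) (i, y)
          simpa [E2, sqcup] using this
    · rintro ⟨σ, α, hσ, hα, rfl⟩
      refine ⟨⟨?_, ?_⟩, ?_, ?_⟩
      · rintro ⟨i, x⟩ ⟨j, y⟩ h
        simp only [sqcup, Prod.mk.injEq] at h
        have hij : i = j := hσ.1 h.1
        subst hij
        exact Prod.ext rfl ((hα i).1.1 h.2)
      · rintro ⟨j, y⟩
        obtain ⟨i, hi⟩ := hσ.2 j
        obtain ⟨x, hx⟩ := (hα i).1.2 y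
        exact ⟨(i, x), by simp [sqcup, hi, hx]⟩
      · rintro ⟨i, x⟩ ⟨j, y⟩
        simp only [E1, sqcup]
        exact ⟨fun h hc => h (hσ.1 hc), fun h hc => h (congrArg σ hc)⟩
      · rintro ⟨i, x⟩ ⟨j, y⟩
        simp only [E2, sqcup]
        constructor
        · rintro ⟨rfl, he⟩
          exact ⟨rfl, ((hα i).2 x y).1 he⟩
        · rintro ⟨h, he⟩
          have : i = j := hσ.1 h
          subst this
          exact ⟨rfl, ((hα i).2 x y).2 he⟩
end

section
/- The structure 𝔾 is oligomorphic (for every n ≥ 1 the diagonal action of Aut(𝔾) on Gⁿ has finitely many orbits, hence 𝔾 is ω-categorical), homogeneous (every isomorphism between finite induced substructures of 𝔾 extends to an automorphism of 𝔾), transitive (Aut(𝔾) acts transitively on G), and has no algebraicity. -/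
section Aux

instance (x y : Kdom) : Decidable (Kedge x y) :=
  inferInstanceAs (Decidable (x.isLeft ≠ y.isLeft))

instance (a b : Gdom) : Decidable (E1 a b) :=
  inferInstanceAs (Decidable (a.1 ≠ b.1))

instance (a b : Gdom) : Decidable (E2 a b) :=
  inferInstanceAs (Decidable (a.1 = b.1 ∧ Kedge a.2 b.2))

lemma bool_aux : ∀ x y z : Bool, ((x ≠ z) ↔ (y ≠ z)) → x = y := by decide

lemma isLeft_swap' (x : Kdom) : (Sum.swap x).isLeft = !x.isLeft := by
  cases x <;> rfl

lemma gaut_id : GAut id :=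
  ⟨Function.bijective_id, fun _ _ => Iff.rfl, fun _ _ => Iff.rfl⟩

lemma gaut_comp {f g : Gdom → Gdom} (hf : GAut f) (hg : GAut g) : GAut (g ∘ f) :=
  ⟨hg.1.comp hf.1, fun a b => (hf.2.1 a b).trans (hg.2.1 _ _),
    fun a b => (hf.2.2 a b).trans (hg.2.2 _ _)⟩

lemma gaut_copy_eq {f : Gdom → Gdom} (hf : GAut f) (r s : Gdom) :
    r.1 = s.1 ↔ (f r).1 = (f s).1 := by
  have := hf.2.1 r s
  unfold E1 at this
  tauto

lemma gaut_side {f : Gdom → Gdom} (hf : GAut f) {r s : Gdom} (h : r.1 = s.1) :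
    (r.2.isLeft ≠ s.2.isLeft) ↔ ((f r).2.isLeft ≠ (f s).2.isLeft) := by
  have h2 := hf.2.2 r s
  have h1 := (gaut_copy_eq hf r s).mp h
  unfold E2 Kedge at h2
  tauto

lemma gaut_of_inv {f : Gdom → Gdom} (hb : Function.Bijective f)
    (h1 : ∀ r, (f r).1 = r.1) (h2 : ∀ r, (f r).2.isLeft = r.2.isLeft) : GAut f := by
  refine ⟨hb, fun a b => ?_, fun a b => ?_⟩
  · unfold E1; rw [h1, h1]
  · unfold E2 Kedge; rw [h1, h1, h2, h2]

lemma gaut_swap {p q : Gdom} (hc : p.1 = q.1) (hs : p.2.isLeft = q.2.isLeft) :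
    GAut (Equiv.swap p q) := by
  apply gaut_of_inv (Equiv.swap p q).bijective
  · intro r
    rcases eq_or_ne r p with rfl | hp
    · rw [Equiv.swap_apply_left]; exact hc.symm
    rcases eq_or_ne r q with rfl | hq
    · rw [Equiv.swap_apply_right]; exact hc
    · rw [Equiv.swap_apply_of_ne_of_ne hp hq]
  · intro r
    rcases eq_or_ne r p with rfl | hp
    · rw [Equiv.swap_apply_left]; exact hs.symm
    rcases eq_or_ne r q with rfl | hq
    · rw [Equiv.swap_apply_right]; exact hs
    · rw [Equiv.swap_apply_of_ne_of_ne hp hq]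

/-- Swapping two copies. -/
def copySwap (c1 c2 : ℕ) : Gdom → Gdom := fun p => (Equiv.swap c1 c2 p.1, p.2)

lemma copySwap_inv (c1 c2 : ℕ) : Function.Involutive (copySwap c1 c2) := by
  intro p; unfold copySwap; simp

lemma gaut_copySwap (c1 c2 : ℕ) : GAut (copySwap c1 c2) := by
  refine ⟨(copySwap_inv c1 c2).bijective, fun a b => ?_, fun a b => ?_⟩
  · unfold E1 copySwap
    simp
  · unfold E2 copySwap
    simp

/-- Swapping the two sides within copy `c`. -/
def sideSwapAt (c : ℕ) : Gdom → Gdom :=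
  fun p => (p.1, if p.1 = c then p.2.swap else p.2)

lemma sideSwapAt_inv (c : ℕ) : Function.Involutive (sideSwapAt c) := by
  intro p
  show (p.1, if p.1 = c then (if p.1 = c then p.2.swap else p.2).swap
      else (if p.1 = c then p.2.swap else p.2)) = p
  by_cases h : p.1 = c
  · rw [if_pos h, if_pos h, Sum.swap_swap]
  · rw [if_neg h, if_neg h]

lemma kedge_swap (x y : Kdom) : Kedge x.swap y.swap ↔ Kedge x y := by
  cases x <;> cases y <;> simp [Kedge, Sum.swap]

lemma gaut_sideSwapAt (c : ℕ) : GAut (sideSwapAt c) := by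
  refine ⟨(sideSwapAt_inv c).bijective, fun a b => ?_, fun a b => ?_⟩
  · unfold E1 sideSwapAt; rfl
  · unfold E2 sideSwapAt
    by_cases hab : a.1 = b.1
    · by_cases hc : a.1 = c
      · rw [hab] at hc ⊢
        simp only [hc, if_pos, hab, true_and]
        exact (kedge_swap _ _).symm
      · rw [hab] at hc ⊢
        simp only [hc, if_neg, not_false_iff, hab, true_and]
    · constructor
      · rintro ⟨h, -⟩; exact absurd h hab
      · rintro ⟨h, -⟩; exact absurd h hab

/-- The homogeneity lemma, proved by induction on the tuple length. -/
lemma homog : ∀ (n : ℕ) (a b : Fin n → Gdom),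
    (∀ j l : Fin n,
      (a j = a l ↔ b j = b l) ∧ (E1 (a j) (a l) ↔ E1 (b j) (b l)) ∧
      (E2 (a j) (a l) ↔ E2 (b j) (b l))) →
    ∃ f, GAut f ∧ ∀ j, f (a j) = b j := by
  intro n
  induction n with
  | zero => exact fun a b _ => ⟨id, gaut_id, fun j => j.elim0⟩
  | succ m ih =>
    intro a b H
    obtain ⟨f0, hf0, hf0a⟩ := ih (a ∘ Fin.castSucc) (b ∘ Fin.castSucc)
      (fun j l => H _ _)
    have hf0a' : ∀ j : Fin m, f0 (a j.castSucc) = b j.castSucc := hf0a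
    set p := f0 (a (Fin.last m)) with hp
    set q := b (Fin.last m) with hq
    by_cases hold : ∃ j : Fin m, a j.castSucc = a (Fin.last m)
    · obtain ⟨j0, hj0⟩ := hold
      have hb : b j0.castSucc = q := (H j0.castSucc (Fin.last m)).1.mp hj0
      refine ⟨f0, hf0, fun j => ?_⟩
      refine Fin.lastCases ?_ (fun i => hf0a' i) j
      calc f0 (a (Fin.last m)) = f0 (a j0.castSucc) := by rw [hj0]
        _ = b j0.castSucc := hf0a' j0
        _ = q := hb
    · push_neg at hold
      have hbne : ∀ j : Fin m, b j.castSucc ≠ q := fun j h => hold j ((H _ _).1.mpr h)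
      have hpne : ∀ j : Fin m, b j.castSucc ≠ p := by
        intro j h
        apply hold j
        apply hf0.1.1
        rw [hf0a' j]
        exact h
      by_cases hcopy : ∃ j0 : Fin m, (a j0.castSucc).1 = (a (Fin.last m)).1
      · -- the new point lies in a copy already used
        obtain ⟨j0, hj0⟩ := hcopy
        have h1 : (b j0.castSucc).1 = q.1 := by
          have := (H j0.castSucc (Fin.last m)).2.1
          unfold E1 at this
          tauto
        have h2 : (b j0.castSucc).1 = p.1 := by
          have := (gaut_copy_eq hf0 (a j0.castSucc) (a (Fin.last m))).mp hj0
          rw [hf0a' j0] at this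
          exact this
        have hpq1 : p.1 = q.1 := h2.symm.trans h1
        have hs1 : ((a (Fin.last m)).2.isLeft ≠ (a j0.castSucc).2.isLeft) ↔
            (q.2.isLeft ≠ (b j0.castSucc).2.isLeft) := by
          have := (H (Fin.last m) j0.castSucc).2.2
          unfold E2 Kedge at this
          constructor
          · intro h; exact (this.mp ⟨hj0.symm, h⟩).2
          · intro h; exact (this.mpr ⟨h1.symm, h⟩).2
        have hs2 : ((a (Fin.last m)).2.isLeft ≠ (a j0.castSucc).2.isLeft) ↔
            (p.2.isLeft ≠ (b j0.castSucc).2.isLeft) := by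
          have := gaut_side hf0 (hj0.symm : (a (Fin.last m)).1 = (a j0.castSucc).1)
          rw [hf0a' j0] at this
          exact this
        have hpq2 : p.2.isLeft = q.2.isLeft :=
          bool_aux _ _ _ (hs2.symm.trans hs1)
        refine ⟨(Equiv.swap p q) ∘ f0, gaut_comp hf0 (gaut_swap hpq1 hpq2), fun j => ?_⟩
        refine Fin.lastCases ?_ (fun i => ?_) j
        · show Equiv.swap p q (f0 (a (Fin.last m))) = q
          rw [← hp, Equiv.swap_apply_left]
        · show Equiv.swap p q (f0 (a i.castSucc)) = b i.castSucc
          rw [hf0a' i, Equiv.swap_apply_of_ne_of_ne (hpne i) (hbne i)]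
      · -- the new point lies in a fresh copy
        push_neg at hcopy
        have hbq1 : ∀ j : Fin m, (b j.castSucc).1 ≠ q.1 := by
          intro j h
          apply hcopy j
          have := (H j.castSucc (Fin.last m)).2.1
          unfold E1 at this
          tauto
        have hbp1 : ∀ j : Fin m, (b j.castSucc).1 ≠ p.1 := by
          intro j h
          apply hcopy j
          have := (gaut_copy_eq hf0 (a j.castSucc) (a (Fin.last m)))
          rw [hf0a' j] at this
          exact this.mpr h
        have hg1fix : ∀ j : Fin m, copySwap p.1 q.1 (b j.castSucc) = b j.castSucc := by
          intro j
          show (Equiv.swap p.1 q.1 (b j.castSucc).1, (b j.castSucc).2) = b j.castSucc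
          rw [Equiv.swap_apply_of_ne_of_ne (hbp1 j) (hbq1 j)]
        have hg1p : copySwap p.1 q.1 p = (q.1, p.2) := by
          show (Equiv.swap p.1 q.1 p.1, p.2) = (q.1, p.2)
          rw [Equiv.swap_apply_left]
        by_cases hside : p.2.isLeft = q.2.isLeft
        · refine ⟨(Equiv.swap (q.1, p.2) q) ∘ (copySwap p.1 q.1) ∘ f0,
            gaut_comp (gaut_comp hf0 (gaut_copySwap p.1 q.1))
              (gaut_swap rfl hside), fun j => ?_⟩
          refine Fin.lastCases ?_ (fun i => ?_) j
          · show Equiv.swap (q.1, p.2) q (copySwap p.1 q.1 (f0 (a (Fin.last m)))) = q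
            rw [← hp, hg1p, Equiv.swap_apply_left]
          · show Equiv.swap (q.1, p.2) q (copySwap p.1 q.1 (f0 (a i.castSucc))) = b i.castSucc
            rw [hf0a' i, hg1fix i]
            apply Equiv.swap_apply_of_ne_of_ne
            · intro h
              exact hbq1 i (by rw [h])
            · exact hbne i
        · have hside' : (p.2.swap).isLeft = q.2.isLeft := by
            rw [isLeft_swap']
            revert hside
            cases p.2.isLeft <;> cases q.2.isLeft <;> simp
          have hss : sideSwapAt q.1 (q.1, p.2) = (q.1, p.2.swap) := by
            unfold sideSwapAt
            simp
          have hssfix : ∀ j : Fin m, sideSwapAt q.1 (b j.castSucc) = b j.castSucc := by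
            intro j
            unfold sideSwapAt
            rw [if_neg (hbq1 j)]
          refine ⟨(Equiv.swap (q.1, p.2.swap) q) ∘ (sideSwapAt q.1) ∘ (copySwap p.1 q.1) ∘ f0,
            gaut_comp (gaut_comp (gaut_comp hf0 (gaut_copySwap p.1 q.1))
              (gaut_sideSwapAt q.1)) (gaut_swap rfl hside'), fun j => ?_⟩
          refine Fin.lastCases ?_ (fun i => ?_) j
          · show Equiv.swap (q.1, p.2.swap) q
              (sideSwapAt q.1 (copySwap p.1 q.1 (f0 (a (Fin.last m))))) = q
            rw [← hp, hg1p, hss, Equiv.swap_apply_left]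
          · show Equiv.swap (q.1, p.2.swap) q
              (sideSwapAt q.1 (copySwap p.1 q.1 (f0 (a i.castSucc)))) = b i.castSucc
            rw [hf0a' i, hg1fix i, hssfix i]
            apply Equiv.swap_apply_of_ne_of_ne
            · intro h
              exact hbq1 i (by rw [h])
            · exact hbne i

/-- The "type" of a tuple: the full quantifier-free diagram, as a boolean matrix. -/
def typeOf {n : ℕ} (x : Fin n → Gdom) : Fin n → Fin n → Bool × Bool × Bool :=
  fun j l => (decide (x j = x l), decide (E1 (x j) (x l)), decide (E2 (x j) (x l)))

lemma hyp_of_typeOf_eq {n : ℕ} {x y : Fin n → Gdom} (h : typeOf x = typeOf y) :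
    ∀ j l : Fin n,
      (x j = x l ↔ y j = y l) ∧ (E1 (x j) (x l) ↔ E1 (y j) (y l)) ∧
      (E2 (x j) (x l) ↔ E2 (y j) (y l)) := by
  intro j l
  have h' := congrFun (congrFun h j) l
  simp only [typeOf, Prod.mk.injEq] at h'
  exact ⟨decide_eq_decide.mp h'.1, decide_eq_decide.mp h'.2.1, decide_eq_decide.mp h'.2.2⟩

lemma orbit_eq_of_typeOf_eq {n : ℕ} {x y : Fin n → Gdom} (h : typeOf x = typeOf y) :
    {z | ∃ f, GAut f ∧ z = fun j => f (x j)} = {z | ∃ f, GAut f ∧ z = fun j => f (y j)} := by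
  obtain ⟨g, hg, hgv⟩ := homog n x y (hyp_of_typeOf_eq h)
  obtain ⟨g', hg', hgv'⟩ := homog n y x (hyp_of_typeOf_eq h.symm)
  ext z
  constructor
  · rintro ⟨f, hf, rfl⟩
    refine ⟨f ∘ g', gaut_comp hg' hf, funext fun j => ?_⟩
    show f (x j) = f (g' (y j))
    rw [hgv' j]
  · rintro ⟨f, hf, rfl⟩
    refine ⟨f ∘ g, gaut_comp hg hf, funext fun j => ?_⟩
    show f (y j) = f (g (x j))
    rw [hgv j]

end Aux

/-- The structure `𝔾` is oligomorphic (finitely many orbits on `n`-tuples for each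
`n ≥ 1`), homogeneous (every finite partial isomorphism extends to an automorphism),
transitive, and has no algebraicity. -/
theorem stmt14 :
    (∀ n : ℕ, 1 ≤ n →
      {O : Set (Fin n → Gdom) | ∃ x : Fin n → Gdom,
        O = {y | ∃ f, GAut f ∧ y = fun j => f (x j)}}.Finite) ∧
    (∀ (n : ℕ) (a b : Fin n → Gdom),
      (∀ j l : Fin n,
        (a j = a l ↔ b j = b l) ∧ (E1 (a j) (a l) ↔ E1 (b j) (b l)) ∧
        (E2 (a j) (a l) ↔ E2 (b j) (b l))) →
      ∃ f, GAut f ∧ ∀ j, f (a j) = b j) ∧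
    (∀ a b : Gdom, ∃ f, GAut f ∧ f a = b) ∧
    (∀ (Y : Finset Gdom) (a : Gdom), a ∉ Y →
      {c : Gdom | ∃ f, GAut f ∧ (∀ y ∈ Y, f y = y) ∧ f a = c}.Infinite) := by
  refine ⟨?_, homog, ?_, ?_⟩
  · -- oligomorphic
    intro n _
    set S := {O : Set (Fin n → Gdom) | ∃ x : Fin n → Gdom,
        O = {y | ∃ f, GAut f ∧ y = fun j => f (x j)}} with hS
    have hrep : ∀ O : S, ∃ x : Fin n → Gdom,
        (O : Set (Fin n → Gdom)) = {y | ∃ f, GAut f ∧ y = fun j => f (x j)} :=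
      fun O => O.2
    choose rep hrepv using hrep
    have hinj : Function.Injective (fun O : S => typeOf (rep O)) := by
      intro O O' h
      apply Subtype.ext
      rw [hrepv O, hrepv O']
      exact orbit_eq_of_typeOf_eq h
    have : Finite S := Finite.of_injective _ hinj
    exact Set.toFinite S
  · -- transitive
    intro a b
    obtain ⟨f, hf, hfv⟩ := homog 1 (fun _ => a) (fun _ => b) (by
      intro j l
      refine ⟨by simp, ?_, ?_⟩
      · unfold E1; simp
      · unfold E2 Kedge; simp)
    exact ⟨f, hf, hfv 0⟩
  · -- no algebraicity
    intro Y a ha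
    set e : ℕ → Gdom := fun k => (a.1, if a.2.isLeft then Sum.inl k else Sum.inr k) with he
    have einj : Function.Injective e := by
      intro k k' h
      by_cases hh : a.2.isLeft <;> simp [he, hh] at h <;> exact h
    have eside : ∀ k, (e k).2.isLeft = a.2.isLeft := by
      intro k
      by_cases hh : a.2.isLeft <;> simp [he, hh]
    have hsub : e '' {k | e k ∉ Y} ⊆
        {c : Gdom | ∃ f, GAut f ∧ (∀ y ∈ Y, f y = y) ∧ f a = c} := by
      rintro _ ⟨k, hk, rfl⟩
      refine ⟨Equiv.swap a (e k), gaut_swap rfl (eside k).symm, fun y hy => ?_,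
        Equiv.swap_apply_left a (e k)⟩
      apply Equiv.swap_apply_of_ne_of_ne
      · intro h; exact ha (h ▸ hy)
      · intro h; exact hk (h ▸ hy)
    have hfin : (e ⁻¹' (Y : Set Gdom)).Finite :=
      Set.Finite.preimage einj.injOn Y.finite_toSet
    have hinf : Set.Infinite {k | e k ∉ Y} := hfin.infinite_compl
    exact Set.Infinite.mono hsub (hinf.image (einj.injOn))
end

section
/- Let C be the induced substructure of 𝔾 on ℕ × {a_{+1}, a_{−1}}. Then: (a) C is a model-complete core; (b) 𝔾 and C are homomorphically equivalent; and (c) C has algebraicity — namely, every automorphism of C fixing (0, a_{+1}) also fixes (0, a_{−1}), so the orbit of (0, a_{−1}) under the pointwise stabilizer of {(0, a_{+1})} in Aut(C) is finite. -/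
/-- The fixed element `a₊₁` of the part `A₊` of `K_{2,ω}`. -/
def aP : Kdom := Sum.inl 0

/-- The fixed element `a₋₁` of the part `A₋` of `K_{2,ω}`. -/
def aM : Kdom := Sum.inr 0

/-- The domain `ℕ × {a₊₁, a₋₁}` of the candidate core substructure of `𝔾`. -/
def Cset : Set Gdom := {p | p.2 = aP ∨ p.2 = aM}

/-- The restriction of `E₁` to the induced substructure on `Cset`. -/
def E1C (a b : Cset) : Prop := E1 a.1 b.1

/-- The restriction of `E₂` to the induced substructure on `Cset`. -/
def E2C (a b : Cset) : Prop := E2 a.1 b.1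

/-- Endomorphisms of the induced substructure on `Cset`. -/
def CEnd (f : Cset → Cset) : Prop :=
  (∀ a b, E1C a b → E1C (f a) (f b)) ∧ (∀ a b, E2C a b → E2C (f a) (f b))

/-- Automorphisms of the induced substructure on `Cset`. -/
def CAut (f : Cset → Cset) : Prop :=
  Function.Bijective f ∧ (∀ a b, E1C a b ↔ E1C (f a) (f b)) ∧
    (∀ a b, E2C a b ↔ E2C (f a) (f b))

/-- The element `(0, a₊₁)` of the core. -/
def cP : Cset := ⟨(0, aP), Or.inl rfl⟩

/-- The element `(0, a₋₁)` of the core. -/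
def cM : Cset := ⟨(0, aM), Or.inr rfl⟩

/-!
An endomorphism `f` of `ℂ` separates levels (it preserves `E₁`) and commutes with the map
exchanging the two points of a level, because that other point is the unique `E₂`-neighbour.
Hence on finitely many levels `f` agrees with an automorphism `(i, x) ↦ (π i, x or its swap)`,
where the permutation `π` of `ℕ` extends the level map of `f` from a finite set; so `End ℂ`
lies in the closure of `Aut ℂ`, and conversely preserving a relation is a closed condition.
The same commutation shows that an automorphism fixing `(0, a₊₁)` fixes `(0, a₋₁)`, and
sending each vertex of `𝔾` to the point of `ℂ` on its level and side is a homomorphism.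
-/

open Function

theorem Equiv.Perm.exists_eqOn_of_injOn {α : Type*} [Infinite α] {n : α → α} {s : Set α}
    (hs : s.Finite) (hn : Set.InjOn n s) : ∃ π : Equiv.Perm α, Set.EqOn π n s := by
  obtain ⟨π, hπ⟩ := Cardinal.extend_function_of_lt ⟨fun a : s => n a, hn.injective⟩
    (hs.lt_aleph0.trans_le (Cardinal.aleph0_le_mk α)) ⟨Equiv.refl α⟩
  exact ⟨π, fun a ha => hπ ⟨a, ha⟩⟩

theorem mem_closure_pi_of_forall_finset {ι : Type*} {X : ι → Type*}
    [∀ i, TopologicalSpace (X i)] [∀ i, DiscreteTopology (X i)] {S : Set (∀ i, X i)}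
    {f : ∀ i, X i} (h : ∀ F : Finset ι, ∃ g ∈ S, ∀ i ∈ F, g i = f i) : f ∈ closure S := by
  refine mem_closure_iff.2 fun o ho hfo => ?_
  obtain ⟨I, u, hu, hIu⟩ := isOpen_pi_iff.1 ho f hfo
  obtain ⟨g, hgS, hg⟩ := h I
  exact ⟨g, hIu fun i hi => (hg i hi).symm ▸ (hu i hi).2, hgS⟩

theorem isClosed_setOf_map_rel {A : Type*} [TopologicalSpace A] [DiscreteTopology A]
    (R : A → A → Prop) : IsClosed {f : A → A | ∀ a b, R a b → R (f a) (f b)} := by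
  simp only [Set.ofPred_forall]
  exact isClosed_iInter fun a => isClosed_iInter fun b => isClosed_iInter fun _ =>
    (isClosed_discrete {p : A × A | R p.1 p.2}).preimage (f := fun g : A → A => (g a, g b))
      (by fun_prop)

lemma Kedge_swap {x y : Kdom} : Kedge x.swap y.swap ↔ Kedge x y := by
  cases x <;> cases y <;> simp [Kedge]

lemma swap_mem_Cset {p : Gdom} (hp : p ∈ Cset) : (p.1, p.2.swap) ∈ Cset := by
  rcases hp with h | h <;> simp [Cset, h, aP, aM]

namespace Cset

def partner (c : Cset) : Cset := ⟨(c.1.1, c.1.2.swap), swap_mem_Cset c.2⟩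

def base (i : ℕ) : Cset := ⟨(i, aP), Or.inl rfl⟩

lemma eq_base_or_eq_partner_base (c : Cset) :
    c = base c.1.1 ∨ c = partner (base c.1.1) := by
  rcases c.2 with h | h
  · exact Or.inl (Subtype.ext (Prod.ext rfl h))
  · exact Or.inr (Subtype.ext (Prod.ext rfl h))

lemma E2C_iff_eq_partner {a b : Cset} : E2C a b ↔ b = partner a := by
  rw [Subtype.ext_iff, Prod.ext_iff]
  rcases a.2 with ha | ha <;> rcases b.2 with hb | hb <;>
    simp [E2C, E2, Kedge, partner, ha, hb, aP, aM, eq_comm]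

end Cset

open Cset

lemma CAut.toCEnd {f : Cset → Cset} (hf : CAut f) : CEnd f :=
  ⟨fun a b => (hf.2.1 a b).1, fun a b => (hf.2.2 a b).1⟩

lemma CEnd.map_partner {f : Cset → Cset} (hf : CEnd f) (c : Cset) :
    f (partner c) = partner (f c) :=
  E2C_iff_eq_partner.1 (hf.2 _ _ (E2C_iff_eq_partner.2 rfl))

lemma CEnd.injective_level_base {f : Cset → Cset} (hf : CEnd f) :
    Injective fun i => (f (base i)).1.1 := fun i j hij => by
  by_contra hne
  exact hf.1 (base i) (base j) hne hij

lemma CEnd.eq_of_eq_base {f g : Cset → Cset} (hf : CEnd f) (hg : CEnd g) {c : Cset}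
    (h : f (base c.1.1) = g (base c.1.1)) : f c = g c := by
  rcases eq_base_or_eq_partner_base c with hc | hc <;> rw [hc]
  · exact h
  · rw [hf.map_partner, hg.map_partner, h]

def twist (b : Bool) : Kdom ≃ Kdom := bif b then Equiv.sumComm ℕ ℕ else Equiv.refl Kdom

lemma twist_mem_Cset_iff (b : Bool) (p : Gdom) : p ∈ Cset ↔ (p.1, twist b p.2) ∈ Cset := by
  cases b
  · rfl
  · refine ⟨swap_mem_Cset, fun h => ?_⟩
    simpa [twist] using swap_mem_Cset h

lemma Kedge_twist {b : Bool} {x y : Kdom} : Kedge (twist b x) (twist b y) ↔ Kedge x y := by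
  cases b
  · rfl
  · exact Kedge_swap

def shear (π : Equiv.Perm ℕ) (σ : ℕ → Bool) : Equiv.Perm Cset :=
  (Equiv.prodShear π fun i => twist (σ i)).subtypeEquiv fun p => twist_mem_Cset_iff (σ p.1) p

lemma shear_apply (π : Equiv.Perm ℕ) (σ : ℕ → Bool) (c : Cset) :
    (shear π σ c).1 = (π c.1.1, twist (σ c.1.1) c.1.2) := rfl

lemma shear_CAut (π : Equiv.Perm ℕ) (σ : ℕ → Bool) : CAut (shear π σ) := by
  refine ⟨(shear π σ).bijective, fun a b => π.injective.ne_iff.symm, fun a b => ?_⟩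
  simp only [E2C, E2, shear_apply, π.injective.eq_iff]
  constructor
  · rintro ⟨h, hab⟩
    exact ⟨h, h ▸ Kedge_twist.2 hab⟩
  · rintro ⟨h, hab⟩
    exact ⟨h, Kedge_twist.1 (h ▸ hab)⟩

lemma twist_isRight_aP {y : Kdom} (hy : y = aP ∨ y = aM) : twist y.isRight aP = y := by
  rcases hy with rfl | rfl <;> rfl

lemma CEnd.exists_shear_eqOn {f : Cset → Cset} (hf : CEnd f) {s : Set ℕ} (hs : s.Finite) :
    ∃ π σ, ∀ c : Cset, c.1.1 ∈ s → shear π σ c = f c := by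
  obtain ⟨π, hπ⟩ := Equiv.Perm.exists_eqOn_of_injOn hs hf.injective_level_base.injOn
  refine ⟨π, fun i => (f (base i)).1.2.isRight, fun c hc => ?_⟩
  refine (shear_CAut π _).toCEnd.eq_of_eq_base hf (Subtype.ext (Prod.ext (hπ hc) ?_))
  exact twist_isRight_aP (f (base c.1.1)).2

theorem closure_CAut_eq_CEnd :
    @closure (Cset → Cset) (pwTop Cset) {f | CAut f} = {f | CEnd f} := by
  -- with the discrete topology on `Cset`, `pwTop Cset` is definitionally the product topology
  let _ : TopologicalSpace Cset := ⊥
  have _ : DiscreteTopology Cset := ⟨rfl⟩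
  refine subset_antisymm ?_ fun f hf => mem_closure_pi_of_forall_finset fun F => ?_
  · refine closure_minimal (fun f hf => CAut.toCEnd hf) ?_
    exact (isClosed_setOf_map_rel E1C).inter (isClosed_setOf_map_rel E2C)
  · obtain ⟨π, σ, h⟩ := CEnd.exists_shear_eqOn hf (F.image fun c => c.1.1).finite_toSet
    exact ⟨shear π σ, shear_CAut π σ, fun c hc => h c (Finset.mem_image_of_mem _ hc)⟩

def collapse : Gdom → Cset
  | (i, .inl _) => ⟨(i, aP), Or.inl rfl⟩
  | (i, .inr _) => ⟨(i, aM), Or.inr rfl⟩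

lemma collapse_fst (p : Gdom) : (collapse p).1.1 = p.1 := by
  obtain ⟨i, x | x⟩ := p <;> rfl

lemma isLeft_collapse (p : Gdom) : (collapse p).1.2.isLeft = p.2.isLeft := by
  obtain ⟨i, x | x⟩ := p <;> rfl

/-- The induced substructure `ℂ` of `𝔾` on `ℕ × {a₊₁, a₋₁}` is (a) a model-complete core,
(b) homomorphically equivalent to `𝔾`, and (c) has algebraicity: every automorphism of `ℂ`
fixing `(0, a₊₁)` fixes `(0, a₋₁)`, so the orbit of `(0, a₋₁)` under the stabiliser of
`(0, a₊₁)` is finite. -/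
theorem stmt15 :
    ({f : Cset → Cset | CEnd f} = @closure (Cset → Cset) (pwTop Cset) {f | CAut f}) ∧
    ((∃ g : Gdom → Cset,
        (∀ a b, E1 a b → E1C (g a) (g b)) ∧ (∀ a b, E2 a b → E2C (g a) (g b))) ∧
      (∃ h : Cset → Gdom,
        (∀ a b, E1C a b → E1 (h a) (h b)) ∧ (∀ a b, E2C a b → E2 (h a) (h b)))) ∧
    ((∀ f : Cset → Cset, CAut f → f cP = cP → f cM = cM) ∧
      Set.Finite {b : Cset | ∃ f, CAut f ∧ f cP = cP ∧ f cM = b}) := by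
  have fix_cM : ∀ f : Cset → Cset, CAut f → f cP = cP → f cM = cM := fun f hf hP => by
    change f (partner cP) = partner cP
    rw [hf.toCEnd.map_partner, hP]
  refine ⟨closure_CAut_eq_CEnd.symm, ⟨?_, ?_⟩, fix_cM, ?_⟩
  · refine ⟨collapse, fun a b hab => ?_, fun a b hab => ?_⟩
    · simpa only [E1C, E1, collapse_fst] using hab
    · simpa only [E2C, E2, Kedge, collapse_fst, isLeft_collapse] using hab
  · exact ⟨Subtype.val, fun a b h => h, fun a b h => h⟩
  · refine (Set.finite_singleton cM).subset ?_
    rintro b ⟨f, hf, hP, rfl⟩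
    exact fix_cM f hf hP
end

section
/- Let k ≥ 1 and let p_0,…,p_k, q_0,…,q_k ∈ End(𝔾); set φ(s) = p_k ∘ s ∘ p_{k−1} ∘ s ∘ ⋯ ∘ s ∘ p_0 and ψ(s) = q_k ∘ s ∘ q_{k−1} ∘ s ∘ ⋯ ∘ s ∘ q_0. Assume that φ(id_ℕ ⋉ c_{+1}) ≠ ψ(id_ℕ ⋉ c_{+1}) but φ̃(id_ℕ) = ψ̃(id_ℕ). Then there exists a subset U of Inj(ℕ), open in the topology of pointwise convergence and containing id_ℕ, such that φ(τ ⋉ c_{−1}) ≠ ψ(τ ⋉ c_{−1}) for every τ ∈ U. -/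
/-- `c₊₁`: the endomorphism of `K_{2,ω}` sending all of `A₊` to `a₊₁` and all of
`A₋` to `a₋₁` (sign `+1`). -/
def cplus : Kdom → Kdom := Sum.elim (fun _ => aP) (fun _ => aM)

/-- `c₋₁`: the endomorphism of `K_{2,ω}` sending all of `A₊` to `a₋₁` and all of
`A₋` to `a₊₁` (sign `-1`). -/
def cminus : Kdom → Kdom := Sum.elim (fun _ => aM) (fun _ => aP)

/-- `τ ⋉ s : (i,x) ↦ (τ(i), s(x))`. -/
def ltimes (τ : ℕ → ℕ) (s : Kdom → Kdom) : Gdom → Gdom :=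
  fun p => (τ p.1, s p.2)

/-- `gword k p s = p k ∘ s ∘ p (k-1) ∘ s ∘ ⋯ ∘ s ∘ p 0`: evaluation of the word with
coefficients `p 0, …, p k` at the self-map `s` of `Gdom`. -/
def gword : ℕ → (ℕ → Gdom → Gdom) → (Gdom → Gdom) → Gdom → Gdom
  | 0, p, _ => p 0
  | k + 1, p, s => p (k + 1) ∘ s ∘ gword k p s

/-- `nword k p τ = p k ∘ τ ∘ p (k-1) ∘ τ ∘ ⋯ ∘ τ ∘ p 0`: evaluation of the word with
coefficients `p 0, …, p k` at the self-map `τ` of `ℕ`. -/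
def nword : ℕ → (ℕ → ℕ → ℕ) → (ℕ → ℕ) → ℕ → ℕ
  | 0, p, _ => p 0
  | k + 1, p, s => p (k + 1) ∘ s ∘ nword k p s

/-- `Inj(ℕ)`: the injective self-maps of `ℕ`. -/
abbrev InjN : Type := {τ : ℕ → ℕ // Function.Injective τ}

/-- The topology of pointwise convergence on `Inj(ℕ)`: the subspace topology from the
product topology on `ℕ → ℕ` with each factor discrete. -/
def injTop : TopologicalSpace InjN :=
  TopologicalSpace.induced Subtype.val (@Pi.topologicalSpace ℕ (fun _ => ℕ) (fun _ => ⊥))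

/-- The identity, as an element of `Inj(ℕ)`. -/
def idInj : InjN := ⟨id, fun _ _ h => h⟩

def flipK : Kdom → Kdom := Sum.elim Sum.inr Sum.inl
def flipG : Gdom → Gdom := fun a => (a.1, flipK a.2)

lemma flipG_flipG (a : Gdom) : flipG (flipG a) = a := by
  obtain ⟨i, x⟩ := a; cases x <;> rfl

lemma flipG_iter (k : ℕ) (a : Gdom) : flipG^[k] (flipG^[k] a) = a := by
  induction k generalizing a with
  | zero => rfl
  | succ n ih =>
    rw [Function.iterate_succ_apply' flipG n a, Function.iterate_succ_apply,
        flipG_flipG, ih]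

lemma ltimes_cminus (τ : ℕ → ℕ) (a : Gdom) :
    ltimes τ cminus a = flipG (ltimes τ cplus a) := by
  obtain ⟨i, x⟩ := a; cases x <;> rfl

lemma E2_flip (a : Gdom) : E2 a (flipG a) := by
  obtain ⟨i, x⟩ := a
  refine ⟨rfl, ?_⟩
  cases x <;> simp [flipG, flipK, Kedge]

lemma keyC (P : Gdom → Gdom) (hP : GEnd P) (τ : ℕ → ℕ) (a : Gdom) :
    ltimes τ cplus (P (flipG a)) = flipG (ltimes τ cplus (P a)) := by
  obtain ⟨h1, h2⟩ := hP.2 a (flipG a) (E2_flip a)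
  show ((τ (P (flipG a)).1 : ℕ), cplus (P (flipG a)).2)
      = ((τ (P a).1 : ℕ), flipK (cplus (P a).2))
  rw [← h1]
  refine Prod.ext rfl ?_
  revert h2
  cases (P a).2 <;> cases (P (flipG a)).2 <;>
    simp [Kedge, cplus, flipK, aP, aM]

lemma commuteWord (τ : ℕ → ℕ) (p : ℕ → Gdom → Gdom) :
    ∀ m, (∀ j ≤ m, GEnd (p j)) → ∀ a,
      ltimes τ cplus (gword m p (ltimes τ cplus) (flipG a)) =
        flipG (ltimes τ cplus (gword m p (ltimes τ cplus) a)) := by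
  intro m
  induction m with
  | zero => intro hp a; exact keyC (p 0) (hp 0 le_rfl) τ a
  | succ n ih =>
    intro hp a
    have ih' := ih (fun j hj => hp j (hj.trans (Nat.le_succ n))) a
    show ltimes τ cplus (p (n+1) (ltimes τ cplus (gword n p (ltimes τ cplus) (flipG a))))
        = flipG (ltimes τ cplus (p (n+1) (ltimes τ cplus (gword n p (ltimes τ cplus) a))))
    rw [ih']
    exact keyC (p (n+1)) (hp (n+1) le_rfl) τ _

lemma mainLemma (τ : ℕ → ℕ) (p : ℕ → Gdom → Gdom) :
    ∀ m, (∀ j ≤ m, GEnd (p j)) → ∀ a,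
      gword m p (ltimes τ cminus) a = gword m p (ltimes τ cplus) (flipG^[m] a) := by
  intro m
  induction m with
  | zero => intro _ a; rfl
  | succ n ih =>
    intro hp a
    show p (n+1) (ltimes τ cminus (gword n p (ltimes τ cminus) a))
        = p (n+1) (ltimes τ cplus (gword n p (ltimes τ cplus) (flipG^[n+1] a)))
    rw [ih (fun j hj => hp j (hj.trans (Nat.le_succ n))) a, ltimes_cminus,
        ← commuteWord τ p n (fun j hj => hp j (hj.trans (Nat.le_succ n))),
        ← Function.iterate_succ_apply' flipG n a]

lemma localLemma (c : Kdom → Kdom) (p : ℕ → Gdom → Gdom) (a : Gdom) (τ : ℕ → ℕ) :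
    ∀ m, (∀ j, j < m → τ ((gword j p (ltimes id c) a).1) = (gword j p (ltimes id c) a).1) →
      gword m p (ltimes τ c) a = gword m p (ltimes id c) a := by
  intro m
  induction m with
  | zero => intro _; rfl
  | succ n ih =>
    intro h
    show p (n+1) (ltimes τ c (gword n p (ltimes τ c) a))
        = p (n+1) (ltimes id c (gword n p (ltimes id c) a))
    rw [ih (fun j hj => h j (hj.trans (Nat.lt_succ_self n)))]
    have hv : ltimes τ c (gword n p (ltimes id c) a)
        = (τ (gword n p (ltimes id c) a).1, c (gword n p (ltimes id c) a).2) := rfl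
    rw [hv, h n (Nat.lt_succ_self n)]
    rfl


/-- For words `φ, ψ` of equal length `k ≥ 1` with coefficients in `End(𝔾)`: if
`φ(id ⋉ c₊₁) ≠ ψ(id ⋉ c₊₁)` but `φ̃(id) = ψ̃(id)`, then there is a pointwise-open
neighbourhood `U` of `id` in `Inj(ℕ)` with `φ(τ ⋉ c₋₁) ≠ ψ(τ ⋉ c₋₁)` for all `τ ∈ U`.
Here `p̃ : ℕ → ℕ` denotes the injection describing how `p ∈ End(𝔾)` permutes the
copies of `K_{2,ω}`, given by the hypotheses `hpt`, `hqt`. -/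
theorem stmt16 (k : ℕ) (hk : 1 ≤ k) (p q : ℕ → Gdom → Gdom)
    (hp : ∀ j ≤ k, GEnd (p j)) (hq : ∀ j ≤ k, GEnd (q j))
    (pt qt : ℕ → ℕ → ℕ)
    (hpt : ∀ j ≤ k, ∀ a : Gdom, (p j a).1 = pt j a.1)
    (hqt : ∀ j ≤ k, ∀ a : Gdom, (q j a).1 = qt j a.1)
    (hdiff : gword k p (ltimes id cplus) ≠ gword k q (ltimes id cplus))
    (heq : nword k pt id = nword k qt id) :
    ∃ U : Set InjN, @IsOpen InjN injTop U ∧ idInj ∈ U ∧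
      ∀ τ ∈ U, gword k p (ltimes τ.1 cminus) ≠ gword k q (ltimes τ.1 cminus) := by
  obtain ⟨a, ha⟩ := Function.ne_iff.mp hdiff
  classical
  set gp : ℕ → ℕ := fun j => (gword j p (ltimes id cplus) a).1 with hgp
  set gq : ℕ → ℕ := fun j => (gword j q (ltimes id cplus) a).1 with hgq
  letI : ∀ _ : ℕ, TopologicalSpace ℕ := fun _ => ⊥
  haveI hdisc : DiscreteTopology ℕ := discreteTopology_bot ℕ
  refine ⟨Subtype.val ⁻¹' (⋂ j ∈ Finset.range k,
    ((fun f : ℕ → ℕ => f (gp j)) ⁻¹' {gp j} ∩ (fun f : ℕ → ℕ => f (gq j)) ⁻¹' {gq j})),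
    ?_, ?_, ?_⟩
  · exact isOpen_induced (isOpen_biInter_finset (fun j _ =>
      (((continuous_apply (gp j)).isOpen_preimage _ (isOpen_discrete _)).inter
        ((continuous_apply (gq j)).isOpen_preimage _ (isOpen_discrete _)))))
  · simp [idInj]
  · intro τ hτ hcontra
    simp only [Set.mem_preimage, Set.mem_iInter, Set.mem_inter_iff,
      Set.mem_singleton_iff, Finset.mem_range] at hτ
    have h1 : gword k p (ltimes τ.1 cminus) (flipG^[k] a)
        = gword k p (ltimes id cplus) a := by
      rw [mainLemma τ.1 p k hp (flipG^[k] a), flipG_iter,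
        localLemma cplus p a τ.1 k (fun j hj => (hτ j hj).1)]
    have h2 : gword k q (ltimes τ.1 cminus) (flipG^[k] a)
        = gword k q (ltimes id cplus) a := by
      rw [mainLemma τ.1 q k hq (flipG^[k] a), flipG_iter,
        localLemma cplus q a τ.1 k (fun j hj => (hτ j hj).2)]
    exact ha (by rw [← h1, ← h2, hcontra])
end

section
/- Let ℓ < k and let p_0,…,p_k, q_0,…,q_ℓ ∈ End(𝔾); set φ(s) = p_k ∘ s ∘ p_{k−1} ∘ s ∘ ⋯ ∘ s ∘ p_0 and ψ(s) = q_ℓ ∘ s ∘ q_{ℓ−1} ∘ s ∘ ⋯ ∘ s ∘ q_0. Then the set V := {τ ∈ Inj(ℕ) : φ̃(τ) ≠ ψ̃(τ)} is dense and open in Inj(ℕ) with the topology of pointwise convergence, and for every τ ∈ V and every endomorphism t of K_{2,ω} one has φ(τ ⋉ t) ≠ ψ(τ ⋉ t). -/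
/-! ### Auxiliary machinery -/

/-- Tail words: `tailw p τ s n u = p (s+n) (τ (⋯ p (s+1) (τ u)))`, `n` applications of
`τ` interleaved with coefficients `p (s+1), …, p (s+n)`, starting from `u`. -/
def tailw (p : ℕ → ℕ → ℕ) (τ : ℕ → ℕ) (s : ℕ) : ℕ → ℕ → ℕ
  | 0, u => u
  | n + 1, u => p (s + n + 1) (τ (tailw p τ s n u))

lemma tailw_shift (p : ℕ → ℕ → ℕ) (τ : ℕ → ℕ) (s n u) :
    tailw p τ s (n + 1) u = tailw p τ (s + 1) n (p (s + 1) (τ u)) := by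
  induction n with
  | zero => rfl
  | succ m ih =>
    show p (s + (m + 1) + 1) (τ (tailw p τ s (m + 1) u)) =
      p (s + 1 + m + 1) (τ (tailw p τ (s + 1) m (p (s + 1) (τ u))))
    rw [ih]
    congr 1
    omega

lemma nword_eq_tailw (p : ℕ → ℕ → ℕ) (τ : ℕ → ℕ) (n a) :
    nword n p τ a = tailw p τ 0 n (p 0 a) := by
  induction n with
  | zero => rfl
  | succ m ih =>
    show p (m + 1) (τ (nword m p τ a)) = p (0 + m + 1) (τ (tailw p τ 0 m (p 0 a)))
    rw [ih]
    congr 1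
    omega

lemma nword_congr (p : ℕ → ℕ → ℕ) (τ g : ℕ → ℕ) (a n : ℕ)
    (h : ∀ j < n, g (nword j p τ a) = τ (nword j p τ a)) :
    nword n p g a = nword n p τ a := by
  induction n with
  | zero => rfl
  | succ m ih =>
    show p (m + 1) (g (nword m p g a)) = p (m + 1) (τ (nword m p τ a))
    rw [ih (fun j hj => h j (by omega)), h m (by omega)]

/-- Choose a fresh natural number avoiding finitely many constraints through two
injections. -/
lemma fresh (A B1 B2 : Finset ℕ) (h1 h2 : ℕ → ℕ) (inj1 : Function.Injective h1)
    (inj2 : Function.Injective h2) : ∃ z : ℕ, z ∉ A ∧ h1 z ∉ B1 ∧ h2 z ∉ B2 := by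
  have hfin : ((↑A ∪ h1 ⁻¹' ↑B1) ∪ h2 ⁻¹' ↑B2 : Set ℕ).Finite :=
    (A.finite_toSet.union (B1.finite_toSet.preimage inj1.injOn)).union
      (B2.finite_toSet.preimage inj2.injOn)
  obtain ⟨z, hz⟩ := hfin.infinite_compl.nonempty
  simp only [Set.mem_compl_iff, Set.mem_union, Finset.mem_coe, Set.mem_preimage, not_or] at hz
  exact ⟨z, hz.1.1, hz.1.2, hz.2⟩

/-- Modify an injection at a point outside a committed finite domain. -/
lemma swapExt (f : ℕ → ℕ) (hf : Function.Injective f) (D : Finset ℕ) (u z : ℕ)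
    (hu : u ∉ D) (hz : ∀ x ∈ D, f x ≠ z) :
    ∃ g : ℕ → ℕ, Function.Injective g ∧ g u = z ∧ ∀ x ∈ D, g x = f x := by
  refine ⟨(Equiv.swap z (f u)) ∘ f, (Equiv.injective _).comp hf, ?_, ?_⟩
  · simp [Equiv.swap_apply_right]
  · intro x hx
    have h1 : f x ≠ z := hz x hx
    have h2 : f x ≠ f u := fun h => hu (hf h ▸ hx)
    simp [Function.comp, Equiv.swap_apply_of_ne_of_ne h1 h2]

/-- Key genericity lemma: two tail words of different remaining lengths `j < i` can be
forced to disagree by extending any injection outside a committed finite domain. -/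
lemma lemA (k l : ℕ) (pt qt : ℕ → ℕ → ℕ)
    (hpi : ∀ j ≤ k, Function.Injective (pt j))
    (hqi : ∀ j ≤ l, Function.Injective (qt j)) :
    ∀ i j, j < i → ∀ si sj, si + i ≤ k → sj + j ≤ l →
    ∀ f : ℕ → ℕ, Function.Injective f → ∀ (D : Finset ℕ) (u v : ℕ),
      u ∉ D → (j = 0 ∨ v ∉ D) →
      ∃ g : ℕ → ℕ, Function.Injective g ∧ (∀ x ∈ D, g x = f x) ∧
        tailw pt g si i u ≠ tailw qt g sj j v := by
  intro i
  induction i with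
  | zero => intro j hj; exact absurd hj (Nat.not_lt_zero _)
  | succ m ih =>
    intro j hj si sj hsk hsl f hf D u v hu hv
    rcases j with _ | j'
    · -- ψ-side is finished; its value is `v`.
      rcases m with _ | m'
      · -- last step of the φ-side
        obtain ⟨z, hzA, hz1, -⟩ := fresh (D.image f) {v} ∅ (pt (si + 1)) id
          (hpi _ (by omega)) (fun a b h => h)
        obtain ⟨g, hg, hgu, hgD⟩ := swapExt f hf D u z hu
          (fun x hx h => hzA (h ▸ Finset.mem_image_of_mem f hx))
        refine ⟨g, hg, hgD, ?_⟩
        show pt (si + 0 + 1) (g (tailw pt g si 0 u)) ≠ v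
        show pt (si + 0 + 1) (g u) ≠ v
        rw [hgu]
        simpa using hz1
      · -- φ-side still has ≥ 2 applications left
        obtain ⟨z, hzA, hz1, -⟩ := fresh (D.image f) (insert u D) ∅ (pt (si + 1)) id
          (hpi _ (by omega)) (fun a b h => h)
        obtain ⟨f', hf', hfu, hfD⟩ := swapExt f hf D u z hu
          (fun x hx h => hzA (h ▸ Finset.mem_image_of_mem f hx))
        obtain ⟨g, hg, hgD, hne⟩ := ih 0 (by omega) (si + 1) sj (by omega) (by omega)
          f' hf' (insert u D) (pt (si + 1) z) v hz1 (Or.inl rfl)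
        have hgu : g u = z := (hgD u (Finset.mem_insert_self u D)).trans hfu
        refine ⟨g, hg, fun x hx => (hgD x (Finset.mem_insert_of_mem hx)).trans (hfD x hx), ?_⟩
        rw [tailw_shift, hgu]
        exact hne
    · -- both sides still apply τ; note `m ≥ 1`
      have hvD : v ∉ D := hv.resolve_left (by omega)
      by_cases hue : u = v
      · subst hue
        obtain ⟨z, hzA, hz1, hz2⟩ := fresh (D.image f) (insert u D) (insert u D)
          (pt (si + 1)) (qt (sj + 1)) (hpi _ (by omega)) (hqi _ (by omega))
        obtain ⟨f', hf', hfu, hfD⟩ := swapExt f hf D u z hu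
          (fun x hx h => hzA (h ▸ Finset.mem_image_of_mem f hx))
        obtain ⟨g, hg, hgD, hne⟩ := ih j' (by omega) (si + 1) (sj + 1) (by omega) (by omega)
          f' hf' (insert u D) (pt (si + 1) z) (qt (sj + 1) z) hz1 (Or.inr hz2)
        have hgu : g u = z := (hgD u (Finset.mem_insert_self u D)).trans hfu
        refine ⟨g, hg, fun x hx => (hgD x (Finset.mem_insert_of_mem hx)).trans (hfD x hx), ?_⟩
        rw [tailw_shift, tailw_shift, hgu]
        exact hne
      · -- u ≠ v : two independent fresh values
        obtain ⟨zu, hzuA, hzu1, -⟩ := fresh (D.image f) (insert u (insert v D)) ∅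
          (pt (si + 1)) id (hpi _ (by omega)) (fun a b h => h)
        obtain ⟨f', hf', hfu, hfD⟩ := swapExt f hf D u zu hu
          (fun x hx h => hzuA (h ▸ Finset.mem_image_of_mem f hx))
        obtain ⟨zv, hzvA, hzv1, -⟩ := fresh ((insert u D).image f') (insert u (insert v D)) ∅
          (qt (sj + 1)) id (hqi _ (by omega)) (fun a b h => h)
        obtain ⟨f'', hf'', hfv, hfD'⟩ := swapExt f' hf' (insert u D) v zv
          (by simp only [Finset.mem_insert, not_or]; exact ⟨fun h => hue h.symm, hvD⟩)
          (fun x hx h => hzvA (h ▸ Finset.mem_image_of_mem f' hx))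
        obtain ⟨g, hg, hgD, hne⟩ := ih j' (by omega) (si + 1) (sj + 1) (by omega) (by omega)
          f'' hf'' (insert u (insert v D)) (pt (si + 1) zu) (qt (sj + 1) zv) hzu1 (Or.inr hzv1)
        have hgu : g u = zu :=
          ((hgD u (by simp)).trans (hfD' u (by simp))).trans hfu
        have hgv : g v = zv := (hgD v (by simp)).trans hfv
        refine ⟨g, hg, fun x hx => ((hgD x (by simp [hx])).trans
          (hfD' x (by simp [hx]))).trans (hfD x hx), ?_⟩
        rw [tailw_shift, tailw_shift, hgu, hgv]
        exact hne

/-- For words `φ, ψ` of different lengths `k > ℓ` with coefficients in `End(𝔾)`: the set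
`V = {τ ∈ Inj(ℕ) : φ̃(τ) ≠ ψ̃(τ)}` is dense and open in the pointwise topology on
`Inj(ℕ)`, and `φ(τ ⋉ t) ≠ ψ(τ ⋉ t)` for every `τ ∈ V` and every endomorphism `t` of
`K_{2,ω}`. Here `p̃ : ℕ → ℕ` denotes the injection describing how `p ∈ End(𝔾)` permutes
the copies of `K_{2,ω}`, given by the hypotheses `hpt`, `hqt`. -/
theorem stmt17 (k l : ℕ) (hlk : l < k) (p q : ℕ → Gdom → Gdom)
    (hp : ∀ j ≤ k, GEnd (p j)) (hq : ∀ j ≤ l, GEnd (q j))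
    (pt qt : ℕ → ℕ → ℕ)
    (hpt : ∀ j ≤ k, ∀ a : Gdom, (p j a).1 = pt j a.1)
    (hqt : ∀ j ≤ l, ∀ a : Gdom, (q j a).1 = qt j a.1) :
    @IsOpen InjN injTop {τ : InjN | nword k pt τ.1 ≠ nword l qt τ.1} ∧
    @Dense InjN injTop {τ : InjN | nword k pt τ.1 ≠ nword l qt τ.1} ∧
    ∀ τ : InjN, nword k pt τ.1 ≠ nword l qt τ.1 →
      ∀ t : Kdom → Kdom, KEnd t →
        gword k p (ltimes τ.1 t) ≠ gword l q (ltimes τ.1 t) := by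
  -- the injections induced on the copies are injective
  have hpi : ∀ j ≤ k, Function.Injective (pt j) := by
    intro j hj a b hab
    by_contra hne
    have hE : E1 (a, aP) (b, aP) := hne
    have h2 := (hp j hj).1 _ _ hE
    rw [E1, hpt j hj, hpt j hj] at h2
    exact h2 hab
  have hqi : ∀ j ≤ l, Function.Injective (qt j) := by
    intro j hj a b hab
    by_contra hne
    have hE : E1 (a, aP) (b, aP) := hne
    have h2 := (hq j hj).1 _ _ hE
    rw [E1, hqt j hj, hqt j hj] at h2
    exact h2 hab
  have hWopen : IsOpen {f : ℕ → ℕ | nword k pt f ≠ nword l qt f} := by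
    rw [isOpen_pi_iff]
    intro f hf
    obtain ⟨a, ha⟩ := Function.ne_iff.mp hf
    refine ⟨((Finset.range k).image fun j => nword j pt f a) ∪
      ((Finset.range l).image fun j => nword j qt f a),
      fun x => {f x}, fun x _ => ⟨isOpen_discrete _, rfl⟩, ?_⟩
    intro g hg
    have hgf : ∀ x ∈ ((Finset.range k).image fun j => nword j pt f a) ∪
        ((Finset.range l).image fun j => nword j qt f a), g x = f x := by
      intro x hx
      exact hg x (Finset.mem_coe.mpr hx)
    have e1 : nword k pt g a = nword k pt f a :=
      nword_congr pt f g a k (fun j hj => hgf _ (Finset.mem_union_left _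
        (Finset.mem_image_of_mem _ (Finset.mem_range.mpr hj))))
    have e2 : nword l qt g a = nword l qt f a :=
      nword_congr qt f g a l (fun j hj => hgf _ (Finset.mem_union_right _
        (Finset.mem_image_of_mem _ (Finset.mem_range.mpr hj))))
    show nword k pt g ≠ nword l qt g
    intro hcontra
    exact ha (by rw [← e1, ← e2, hcontra])
  refine ⟨?_, ?_, ?_⟩
  · -- openness
    show IsOpen (Subtype.val ⁻¹' {f : ℕ → ℕ | nword k pt f ≠ nword l qt f})
    exact isOpen_induced hWopen
  · -- density
    intro τ₀
    have key : ∀ O : Set InjN, @IsOpen InjN injTop O → τ₀ ∈ O →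
        (O ∩ {τ : InjN | nword k pt τ.1 ≠ nword l qt τ.1}).Nonempty := by
      intro O hO hmem
      obtain ⟨W, hW, hWO⟩ := isOpen_induced_iff.mp hO
      obtain ⟨I, uu, hI, hsub⟩ := isOpen_pi_iff.mp hW τ₀.1 (by
        rw [← hWO] at hmem; exact hmem)
      obtain ⟨a, -, hu, hv⟩ := fresh ∅ I I (pt 0) (qt 0) (hpi 0 (by omega)) (hqi 0 (by omega))
      obtain ⟨g, hg, hgI, hne⟩ := lemA k l pt qt hpi hqi k l hlk 0 0 (by omega) (by omega)
        τ₀.1 τ₀.2 I (pt 0 a) (qt 0 a) hu (Or.inr hv)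
      refine ⟨⟨g, hg⟩, ?_, ?_⟩
      · rw [← hWO]
        apply hsub
        intro x hx
        have h5 := hI x (Finset.mem_coe.mp hx)
        show g x ∈ uu x
        rw [hgI x (Finset.mem_coe.mp hx)]
        exact h5.2
      · show nword k pt g ≠ nword l qt g
        intro hcontra
        apply hne
        rw [← nword_eq_tailw, ← nword_eq_tailw, hcontra]
    letI : TopologicalSpace InjN := injTop
    exact mem_closure_iff.mpr key
  · -- the group-word consequence
    have coord : ∀ (τ : ℕ → ℕ) (t : Kdom → Kdom) (r : ℕ → Gdom → Gdom) (rt : ℕ → ℕ → ℕ)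
        (N : ℕ), (∀ j ≤ N, ∀ a : Gdom, (r j a).1 = rt j a.1) →
        ∀ n ≤ N, ∀ a : Gdom, (gword n r (ltimes τ t) a).1 = nword n rt τ a.1 := by
      intro τ t r rt N hrt n
      induction n with
      | zero => intro hN a; exact hrt 0 (by omega) a
      | succ m ihm =>
        intro hN a
        show (r (m + 1) (ltimes τ t (gword m r (ltimes τ t) a))).1 =
          rt (m + 1) (τ (nword m rt τ a.1))
        rw [hrt (m + 1) hN]
        show rt (m + 1) (τ (gword m r (ltimes τ t) a).1) = rt (m + 1) (τ (nword m rt τ a.1))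
        rw [ihm (by omega) a]
    intro τ hτ t _ hcontra
    obtain ⟨n, hn⟩ := Function.ne_iff.mp hτ
    apply hn
    have h1 := coord τ.1 t p pt k hpt k le_rfl (n, aP)
    have h2 := coord τ.1 t q qt l hqt l le_rfl (n, aP)
    have h3 : (gword k p (ltimes τ.1 t) (n, aP)).1 = (gword l q (ltimes τ.1 t) (n, aP)).1 := by
      rw [hcontra]
    rw [h1, h2] at h3
    exact h3
end

section
/- The Zariski topology on the monoid End(𝔾) is not Hausdorff; specifically, any Zariski-open set containing id_ℕ ⋉ c_{+1} and any Zariski-open set containing id_ℕ ⋉ c_{−1} have nonempty intersection. -/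
/-- `End(𝔾)` as a submonoid of `Function.End Gdom`. -/
def endG : Submonoid (Function.End Gdom) where
  carrier := {f | GEnd f}
  one_mem' := ⟨fun _ _ h => h, fun _ _ h => h⟩
  mul_mem' := fun {_ _} hf hg =>
    ⟨fun a b h => hf.1 _ _ (hg.1 a b h), fun a b h => hf.2 _ _ (hg.2 a b h)⟩

lemma KEnd_cplus : KEnd cplus := by
  intro x y h
  cases x <;> cases y <;> simp_all [Kedge, cplus, aP, aM]

lemma KEnd_cminus : KEnd cminus := by
  intro x y h
  cases x <;> cases y <;> simp_all [Kedge, cminus, aP, aM]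

lemma GEnd_ltimes_cplus : GEnd (ltimes id cplus) :=
  ⟨fun _ _ h => h, fun _ _ h => ⟨h.1, KEnd_cplus _ _ h.2⟩⟩

lemma GEnd_ltimes_cminus : GEnd (ltimes id cminus) :=
  ⟨fun _ _ h => h, fun _ _ h => ⟨h.1, KEnd_cminus _ _ h.2⟩⟩

/-- `id ⋉ c₊₁` as an element of `End(𝔾)`. -/
def idCplus : ↥endG := ⟨ltimes id cplus, GEnd_ltimes_cplus⟩

/-- `id ⋉ c₋₁` as an element of `End(𝔾)`. -/
def idCminus : ↥endG := ⟨ltimes id cminus, GEnd_ltimes_cminus⟩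

/-!
The witnesses are the endomorphisms `t_σ = (i, x) ↦ (i, c_{±1}(x))`, choosing `c₋₁` on the copies
where `σ : ℕ → Bool` is `true`; thus `t_0 = id ⋉ c₊₁` and `t_1 = id ⋉ c₋₁`. Every endomorphism of
`𝔾` maps copy `i` into one copy and either keeps or exchanges its two parts there, so the value of
a word `φ(t_σ)` on copy `i` depends on `σ` only through the parity of the number of exchanges along
the finite trajectory of `i`. Pulled back along `σ ↦ t_σ` to the Cantor space `ℕ → Bool`, a
subbasic set `M_{φ,ψ}` therefore becomes open; it is a neighbourhood of `0` if it contains `t_0`, or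
if it contains `t_1` and the total number of occurrences of `s` in `φ, ψ` is even; and it is dense
when that number is odd, because flipping `σ` on a far tail changes the two parities differently at
almost every copy. Hence `σ ↦ t_σ` maps the non-trivial filter `𝓝 0 ⊓ residual` into both
`𝓝 (id ⋉ c₊₁)` and `𝓝 (id ⋉ c₋₁)`.
-/

open Filter Topology

instance : TopologicalSpace endG := zariskiTopology endG

lemma wordEval_cons {S : Type*} [Monoid S] (s p₀ q : S) (qs : List S) :
    wordEval s p₀ (q :: qs) = wordEval s q qs * s * p₀ := by
  induction qs generalizing q p₀ with
  | nil => rfl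
  | cons r rs ih =>
    calc wordEval s p₀ (q :: r :: rs) = wordEval s p₀ (r * s * q :: rs) := by
          simp only [wordEval, List.foldl_cons, mul_assoc]
      _ = _ := ih _ _

def copyMap (f : endG) (i : ℕ) : ℕ := (f.val (i, aM)).1

/-- `aM` lies in `A₋₁`, so its image lies in `A₊₁` exactly when `f` exchanges the two parts of
copy `i`. -/
def swapsPart (f : endG) (i : ℕ) : Bool := (f.val (i, aM)).2.isLeft

lemma endG_invariant_of_kedge (f : endG) (i : ℕ) {x y : Kdom} (h : Kedge x y) :
    (f.val (i, x)).1 = (f.val (i, y)).1 ∧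
      ((f.val (i, x)).2.isLeft ^^ x.isLeft) = ((f.val (i, y)).2.isLeft ^^ y.isLeft) := by
  obtain ⟨hfst, hedge⟩ := f.2.2 (i, x) (i, y) ⟨rfl, h⟩
  refine ⟨hfst, ?_⟩
  unfold Kedge at h hedge
  revert h hedge
  cases (f.val (i, x)).2.isLeft <;> cases (f.val (i, y)).2.isLeft <;>
    cases x.isLeft <;> cases y.isLeft <;> decide

lemma endG_apply_fst_and_isLeft (f : endG) (i : ℕ) (x : Kdom) :
    (f.val (i, x)).1 = copyMap f i ∧ ((f.val (i, x)).2.isLeft ^^ x.isLeft) = swapsPart f i := by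
  have hPM := endG_invariant_of_kedge f i (x := aP) (y := aM) (by simp [Kedge, aP, aM])
  cases x with
  | inl n =>
    simpa [copyMap, swapsPart, aM] using
      endG_invariant_of_kedge f i (x := .inl n) (y := aM) (by simp [Kedge, aM])
  | inr n =>
    obtain ⟨h1, h2⟩ := endG_invariant_of_kedge f i (x := .inr n) (y := aP) (by simp [Kedge, aP])
    exact ⟨h1.trans hPM.1, h2.trans (by simpa [swapsPart, aM] using hPM.2)⟩

lemma copyMap_injective (f : endG) : Function.Injective (copyMap f) :=
  fun i j h => by_contra fun hij => f.2.1 (i, aM) (j, aM) hij h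

lemma endG_apply_ne_apply_swap (f : endG) (i : ℕ) (x : Kdom) :
    f.val (i, x) ≠ f.val (i, x.swap) := fun h =>
  (f.2.2 (i, x) (i, x.swap) ⟨rfl, by cases x <;> simp [Kedge]⟩).2 (by rw [h])

def basePt (b : Bool) : Kdom := bif b then aP else aM

def swapEnd (σ : ℕ → Bool) : endG :=
  ⟨sqcup id (fun i => bif σ i then cminus else cplus), fun _ _ h => h, fun a b ⟨h₁, h₂⟩ => by
    refine ⟨congrArg id h₁, ?_⟩
    simp only [sqcup, h₁]
    cases σ b.1
    exacts [KEnd_cplus _ _ h₂, KEnd_cminus _ _ h₂]⟩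

lemma swapEnd_apply_apply (σ : ℕ → Bool) (f : endG) (i : ℕ) (x : Kdom) :
    (swapEnd σ).val (f.val (i, x)) =
      (copyMap f i, basePt (x.isLeft ^^ swapsPart f i ^^ σ (copyMap f i))) := by
  obtain ⟨h₁, h₂⟩ := endG_apply_fst_and_isLeft f i x
  generalize f.val (i, x) = a at h₁ h₂ ⊢
  obtain ⟨j, y⟩ := a
  simp only at h₁ h₂
  subst h₁
  rw [← h₂]
  change (_, (bif σ _ then cminus else cplus) y) = _
  cases σ (copyMap f i) <;> cases x <;> cases y <;> simp [cplus, cminus, basePt]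

lemma cond_swap_basePt (d b : Bool) :
    (bif d then (basePt b).swap else basePt b) = basePt (b ^^ d) := by
  cases d <;> cases b <;> rfl

lemma isLeft_cond_swap (d : Bool) (x : Kdom) :
    (bif d then x.swap else x).isLeft = (x.isLeft ^^ d) := by
  cases d <;> cases x <;> rfl

/-- Parity of the number of part exchanges performed by the factors `swapEnd σ` along the
trajectory of copy `i` through the word `p_k · s ⋯ s · p_0` with `p₀ = p`, `ps = [p_1, …, p_k]`. -/
def swapParity (σ : ℕ → Bool) : endG → List endG → ℕ → Bool
  | _, [], _ => false
  | p, q :: qs, i => σ (copyMap p i) ^^ swapParity σ q qs (copyMap p i)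

theorem wordEval_swapEnd_apply (σ σ' : ℕ → Bool) (p : endG) (ps : List endG) (i : ℕ) (x : Kdom) :
    (wordEval (swapEnd σ) p ps).val (i, x) =
      (wordEval (swapEnd σ') p ps).val
        (i, bif swapParity σ p ps i ^^ swapParity σ' p ps i then x.swap else x) := by
  induction ps generalizing p i x with
  | nil => rfl
  | cons q qs ih =>
    rw [wordEval_cons, wordEval_cons]
    change (wordEval (swapEnd σ) q qs).val ((swapEnd σ).val (p.val (i, x))) =
      (wordEval (swapEnd σ') q qs).val ((swapEnd σ').val (p.val (i, _)))
    rw [swapEnd_apply_apply, swapEnd_apply_apply, ih, cond_swap_basePt, isLeft_cond_swap]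
    simp only [swapParity]
    apply congrArg (fun b => (wordEval (swapEnd σ') q qs).val (copyMap p i, basePt b))
    generalize x.isLeft = a, swapsPart p i = b, σ (copyMap p i) = c, σ' (copyMap p i) = c',
      swapParity σ q qs (copyMap p i) = e, swapParity σ' q qs (copyMap p i) = e'
    revert a b c c' e e'
    decide

lemma swapParity_false (p : endG) (ps : List endG) (i : ℕ) :
    swapParity (fun _ => false) p ps i = false := by
  induction ps generalizing p i with
  | nil => rfl
  | cons q qs ih => simp [swapParity, ih]

lemma swapParity_true (p : endG) (ps : List endG) (i : ℕ) :
    swapParity (fun _ => true) p ps i = ps.length.bodd := by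
  induction ps generalizing p i with
  | nil => rfl
  | cons q qs ih => simp [swapParity, ih]

lemma isLocallyConstant_swapParity (p : endG) (ps : List endG) (i : ℕ) :
    IsLocallyConstant fun σ : ℕ → Bool => swapParity σ p ps i := by
  induction ps generalizing p i with
  | nil => exact IsLocallyConstant.const false
  | cons q qs ih =>
    exact (IsLocallyConstant.iff_continuous _ |>.2 (continuous_apply (copyMap p i))).comp₂
      (ih q (copyMap p i)) (· ^^ ·)

def flipFrom (n : ℕ) (σ : ℕ → Bool) : ℕ → Bool := fun j => σ j ^^ decide (n ≤ j)

lemma tendsto_flipFrom (σ : ℕ → Bool) : Tendsto (flipFrom · σ) atTop (𝓝 σ) :=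
  tendsto_pi_nhds.2 fun j => tendsto_const_nhds.congr' <|
    (eventually_gt_atTop j).mono fun n hn => by simp [flipFrom, Nat.not_le.2 hn]

lemma eventually_swapParity_flipFrom (σ : ℕ → Bool) (n : ℕ) (p : endG) (ps : List endG) :
    ∀ᶠ i in cofinite,
      swapParity (flipFrom n σ) p ps i = (swapParity σ p ps i ^^ ps.length.bodd) := by
  induction ps generalizing p with
  | nil => exact Eventually.of_forall fun _ => rfl
  | cons q qs ih =>
    have htend := (copyMap_injective p).tendsto_cofinite
    have hge : ∀ᶠ j in cofinite, n ≤ j := by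
      rw [Nat.cofinite_eq_atTop]
      exact eventually_ge_atTop n
    filter_upwards [htend.eventually (ih q), htend.eventually hge] with i hi hn
    simp only [swapParity, flipFrom, hi, hn, List.length_cons, Nat.bodd_succ]
    cases σ (copyMap p i) <;> cases swapParity σ q qs (copyMap p i) <;> cases qs.length.bodd <;> rfl

def WordsDifferAt (σ : ℕ → Bool) (p₀ : endG) (ps : List endG) (q₀ : endG) (qs : List endG)
    (i : ℕ) : Prop :=
  ∃ x : Kdom, (wordEval (swapEnd σ) p₀ ps).val (i, x) ≠ (wordEval (swapEnd σ) q₀ qs).val (i, x)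

lemma wordEval_swapEnd_ne_iff {σ : ℕ → Bool} {p₀ q₀ : endG} {ps qs : List endG} :
    wordEval (swapEnd σ) p₀ ps ≠ wordEval (swapEnd σ) q₀ qs ↔
      ∃ i, WordsDifferAt σ p₀ ps q₀ qs i := by
  rw [ne_eq, Subtype.ext_iff]
  exact Function.ne_iff.trans Prod.exists

section Transfer

variable {σ σ' : ℕ → Bool} {p₀ q₀ : endG} {ps qs : List endG} {i : ℕ}

theorem WordsDifferAt.of_swapParity_eq (h : WordsDifferAt σ p₀ ps q₀ qs i)
    (hpar : (swapParity σ p₀ ps i ^^ swapParity σ q₀ qs i) =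
      (swapParity σ' p₀ ps i ^^ swapParity σ' q₀ qs i)) :
    WordsDifferAt σ' p₀ ps q₀ qs i := by
  obtain ⟨x, hx⟩ := h
  have hd : (swapParity σ q₀ qs i ^^ swapParity σ' q₀ qs i) =
      (swapParity σ p₀ ps i ^^ swapParity σ' p₀ ps i) := by
    revert hpar
    cases swapParity σ p₀ ps i <;> cases swapParity σ q₀ qs i <;>
      cases swapParity σ' p₀ ps i <;> cases swapParity σ' q₀ qs i <;> decide
  refine ⟨bif swapParity σ p₀ ps i ^^ swapParity σ' p₀ ps i then x.swap else x, ?_⟩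
  rwa [wordEval_swapEnd_apply σ σ', wordEval_swapEnd_apply σ σ' q₀, hd] at hx

/-- Since the words are evaluated in `End(𝔾)`, they separate `x` from `x.swap`; so when the two
parities change by different amounts, the two evaluations cannot both agree on copy `i`. -/
theorem WordsDifferAt.or_of_swapParity_ne
    (hpar : (swapParity σ p₀ ps i ^^ swapParity σ q₀ qs i) ≠
      (swapParity σ' p₀ ps i ^^ swapParity σ' q₀ qs i)) :
    WordsDifferAt σ p₀ ps q₀ qs i ∨ WordsDifferAt σ' p₀ ps q₀ qs i := by
  by_contra! h
  simp only [WordsDifferAt, not_exists, not_not] at h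
  obtain ⟨h, h'⟩ := h
  set d := swapParity σ p₀ ps i ^^ swapParity σ' p₀ ps i
  set y := bif d then aP.swap else aP
  have hswap :
      (bif swapParity σ q₀ qs i ^^ swapParity σ' q₀ qs i then aP.swap else aP) = y.swap := by
    revert hpar
    simp only [y, d]
    cases swapParity σ p₀ ps i <;> cases swapParity σ q₀ qs i <;>
      cases swapParity σ' p₀ ps i <;> cases swapParity σ' q₀ qs i <;> decide
  apply endG_apply_ne_apply_swap (wordEval (swapEnd σ') p₀ ps) i y
  have := h aP
  rw [wordEval_swapEnd_apply σ σ', wordEval_swapEnd_apply σ σ' q₀, hswap] at this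
  rw [this, h']

end Transfer

section Pullback

variable {p₀ q₀ : endG} {ps qs : List endG}

theorem preimage_swapEnd_mem_nhds {σ₀ σ : ℕ → Bool} {i : ℕ} (h₀ : WordsDifferAt σ₀ p₀ ps q₀ qs i)
    (hpar : (swapParity σ₀ p₀ ps i ^^ swapParity σ₀ q₀ qs i) =
      (swapParity σ p₀ ps i ^^ swapParity σ q₀ qs i)) :
    swapEnd ⁻¹' {s | wordEval s p₀ ps ≠ wordEval s q₀ qs} ∈ 𝓝 σ := by
  refine mem_of_superset ((((isLocallyConstant_swapParity p₀ ps i).comp₂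
    (isLocallyConstant_swapParity q₀ qs i) (· ^^ ·)).isOpen_fiber _).mem_nhds hpar.symm) ?_
  exact fun τ hτ => wordEval_swapEnd_ne_iff.2 ⟨i, h₀.of_swapParity_eq hτ.symm⟩

theorem isOpen_preimage_swapEnd :
    IsOpen (swapEnd ⁻¹' {s | wordEval s p₀ ps ≠ wordEval s q₀ qs}) :=
  isOpen_iff_mem_nhds.2 fun _ hσ =>
    let ⟨_, hi⟩ := wordEval_swapEnd_ne_iff.1 hσ
    preimage_swapEnd_mem_nhds hi rfl

/-- Flipping `σ` on a far tail changes the two swap parities by the parities of the two word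
lengths at almost every copy; when these differ, `WordsDifferAt.or_of_swapParity_ne` applies. -/
theorem dense_preimage_swapEnd (hodd : (ps.length + qs.length).bodd = true) :
    Dense (swapEnd ⁻¹' {s | wordEval s p₀ ps ≠ wordEval s q₀ qs}) := by
  intro σ
  by_cases hσ : σ ∈ swapEnd ⁻¹' {s | wordEval s p₀ ps ≠ wordEval s q₀ qs}
  · exact subset_closure hσ
  refine mem_closure_of_tendsto (tendsto_flipFrom σ) (Eventually.of_forall fun n => ?_)
  obtain ⟨i, hp, hq⟩ := ((eventually_swapParity_flipFrom σ n p₀ ps).and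
    (eventually_swapParity_flipFrom σ n q₀ qs)).exists
  have hpar : (swapParity σ p₀ ps i ^^ swapParity σ q₀ qs i) ≠
      (swapParity (flipFrom n σ) p₀ ps i ^^ swapParity (flipFrom n σ) q₀ qs i) := by
    rw [hp, hq]
    rw [Nat.bodd_add] at hodd
    revert hodd
    cases swapParity σ p₀ ps i <;> cases swapParity σ q₀ qs i <;>
      cases ps.length.bodd <;> cases qs.length.bodd <;> decide
  rcases WordsDifferAt.or_of_swapParity_ne hpar with h | h
  · exact absurd (wordEval_swapEnd_ne_iff.2 ⟨i, h⟩) hσ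
  · exact wordEval_swapEnd_ne_iff.2 ⟨i, h⟩

end Pullback

lemma nhds_inf_residual_neBot {X : Type*} [TopologicalSpace X] [BaireSpace X] (x : X) :
    (𝓝 x ⊓ residual X).NeBot :=
  inf_neBot_iff.2 fun _ hs _ ht =>
    Set.inter_comm _ _ ▸ (dense_of_mem_residual ht).inter_nhds_nonempty hs

theorem tendsto_swapEnd_nhds_idCplus : Tendsto swapEnd (𝓝 fun _ => false) (𝓝 idCplus) := by
  refine TopologicalSpace.tendsto_nhds_generateFrom_iff.2 ?_
  rintro _ ⟨p₀, ps, q₀, qs, rfl⟩ hs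
  obtain ⟨i, hi⟩ := (wordEval_swapEnd_ne_iff (σ := fun _ => false)).1 hs
  exact preimage_swapEnd_mem_nhds hi rfl

theorem tendsto_swapEnd_nhds_idCminus :
    Tendsto swapEnd (𝓝 (fun _ => false) ⊓ residual (ℕ → Bool)) (𝓝 idCminus) := by
  refine TopologicalSpace.tendsto_nhds_generateFrom_iff.2 ?_
  rintro _ ⟨p₀, ps, q₀, qs, rfl⟩ hs
  obtain ⟨i, hi⟩ := (wordEval_swapEnd_ne_iff (σ := fun _ => true)).1 hs
  cases hodd : (ps.length + qs.length).bodd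
  · refine mem_inf_of_left (preimage_swapEnd_mem_nhds hi ?_)
    rwa [swapParity_true, swapParity_true, swapParity_false, swapParity_false, ← Nat.bodd_add]
  · exact mem_inf_of_right (residual_of_dense_open isOpen_preimage_swapEnd
      (dense_preimage_swapEnd hodd))

theorem nhds_idCplus_inf_nhds_idCminus_neBot : (𝓝 idCplus ⊓ 𝓝 idCminus).NeBot :=
  have := nhds_inf_residual_neBot (fun _ : ℕ => false)
  (NeBot.map this swapEnd).mono <| tendsto_inf.2
    ⟨tendsto_swapEnd_nhds_idCplus.mono_left inf_le_left, tendsto_swapEnd_nhds_idCminus⟩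

lemma idCplus_ne_idCminus : idCplus ≠ idCminus := fun h => by
  simpa [idCplus, idCminus, ltimes, cplus, cminus, aP, aM] using
    congrArg (fun f : endG => f.val (0, aP)) h

/-- The Zariski topology on `End(𝔾)` is not Hausdorff: the elements `id ⋉ c₊₁` and
`id ⋉ c₋₁` cannot be separated — any two Zariski-open sets containing them respectively
intersect. -/
theorem stmt19 :
    ¬ @T2Space ↥endG (zariskiTopology ↥endG) ∧
    ∀ U V : Set ↥endG,
      @IsOpen ↥endG (zariskiTopology ↥endG) U →
      @IsOpen ↥endG (zariskiTopology ↥endG) V →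
      idCplus ∈ U → idCminus ∈ V → (U ∩ V).Nonempty := by
  refine ⟨fun _ => nhds_idCplus_inf_nhds_idCminus_neBot.ne ?_, fun U V hU hV hU' hV' => ?_⟩
  · exact disjoint_iff.1 (disjoint_nhds_nhds.2 idCplus_ne_idCminus)
  · exact nhds_idCplus_inf_nhds_idCminus_neBot.nonempty_of_mem
      (inter_mem_inf (hU.mem_nhds hU') (hV.mem_nhds hV'))
end
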